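/- arXiv:2602.10601 — 7 statements merged into one kernel-verified Lean document; each statement's English description precedes it below -/
import Mathlib

section
/- Let E be an election over candidate set C with party partition 𝒫, let p ∈ P ∈ 𝒫 and w ∈ P_w ∈ 𝒫 with P_w ≠ P, and define Δ(c) = |{v ∈ V : w ≻_v c ≻_v p}| − |{v ∈ V : p ≻_v c ≻_v w}| for each candidate c. For each party P̃ ∈ 𝒫 \ {P, P_w} choose a candidate c_{P̃} ∈ P̃ maximizing Δ over P̃, and set C̃ = {p, w} ∪ {c_{P̃} : P̃ ∈ 𝒫 \ {P, P_w}}. Then for every nominee set C' (one candidate per party) with p, w ∈ C', the Borda scores in the reduced elections satisfy score_{E_{C̃}}(w) − score_{E_{C̃}}(p) ≥ score_{E_{C'}}(w) − score_{E_{C'}}(p). -/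
/-!
`score(w) − score(p)` is a sum over the nominees `c` of `#{v : w ≻_v c} − #{v : p ≻_v c}`, and
for `c ∉ {p, w}` this term equals `Δ(c)`, since the voters ranking `c` below both `w` and `p`
cancel. Splitting the sum by parties, all nominee sets containing `p` and `w` agree on the
parties of `p` and `w`, and on every other party the greedy nominee maximizes the term.
-/

open scoped Classical

noncomputable section

/-- The Borda score of candidate `c` in the election with nominee set `C'`. -/
def bordaScore {C V : Type*} [Fintype V] (pref : V → C → C → Prop)
    (C' : Finset C) (c : C) : ℕ :=
  ∑ v : V, (C'.filter fun c' => pref v c c').card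

/-- `C'` contains exactly one nominee of each party of `Ps`. -/
def IsNomineeSet {C : Type*} (Ps : Finset (Finset C)) (C' : Finset C) : Prop :=
  ∀ Pt ∈ Ps, (C' ∩ Pt).card = 1

/-- `Ps` is a partition of the candidate set into nonempty parties. -/
def IsPartition {C : Type*} [Fintype C] (Ps : Finset (Finset C)) : Prop :=
  (∀ Pt ∈ Ps, Pt.Nonempty) ∧ ∀ c : C, ∃! Pt, Pt ∈ Ps ∧ c ∈ Pt

/-- `Δ(c) = |{v : w ≻_v c ≻_v p}| − |{v : p ≻_v c ≻_v w}|`. -/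
def delta {C V : Type*} [Fintype V] (pref : V → C → C → Prop) (p w c : C) : ℤ :=
  ((Finset.univ.filter fun v : V => pref v w c ∧ pref v c p).card : ℤ)
    - ((Finset.univ.filter fun v : V => pref v p c ∧ pref v c w).card : ℤ)

theorem IsNomineeSet.inter_eq_singleton {C : Type*} {Ps : Finset (Finset C)} {C' Pt : Finset C}
    (hC' : IsNomineeSet Ps C') (hPt : Pt ∈ Ps) {c : C} (hc : c ∈ C') (hcPt : c ∈ Pt) :
    C' ∩ Pt = {c} := by
  obtain ⟨a, ha⟩ := Finset.card_eq_one.1 (hC' Pt hPt)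
  have hca : c ∈ C' ∩ Pt := Finset.mem_inter.2 ⟨hc, hcPt⟩
  rw [ha, Finset.mem_singleton] at hca
  rw [ha, hca]

namespace IsPartition

variable {C : Type*} [Fintype C] {Ps : Finset (Finset C)}

theorem eq_of_mem (hpart : IsPartition Ps) {Pt Pt' : Finset C} (hPt : Pt ∈ Ps)
    (hPt' : Pt' ∈ Ps) {c : C} (hc : c ∈ Pt) (hc' : c ∈ Pt') : Pt = Pt' :=
  (hpart.2 c).unique ⟨hPt, hc⟩ ⟨hPt', hc'⟩

theorem sum_eq_sum_sum_inter {M : Type*} [AddCommMonoid M] (hpart : IsPartition Ps)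
    (S : Finset C) (f : C → M) : ∑ c ∈ S, f c = ∑ Pt ∈ Ps, ∑ c ∈ S ∩ Pt, f c := by
  have hS : S = Ps.biUnion (S ∩ ·) := by
    ext c
    obtain ⟨Pt, ⟨hPt, hc⟩, -⟩ := hpart.2 c
    simp only [Finset.mem_biUnion, Finset.mem_inter]
    exact ⟨fun hcS => ⟨Pt, hPt, hcS, hc⟩, fun ⟨_, _, hcS, _⟩ => hcS⟩
  have hdisj : (Ps : Set (Finset C)).PairwiseDisjoint (S ∩ ·) :=
    fun Pt hPt Pt' hPt' hne => Finset.disjoint_left.2 fun c hc hc' =>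
      hne (hpart.eq_of_mem hPt hPt' (Finset.mem_inter.1 hc).2 (Finset.mem_inter.1 hc').2)
  conv_lhs => rw [hS]
  exact Finset.sum_biUnion hdisj

theorem isNomineeSet_image (hpart : IsPartition Ps) {n : Finset C → C}
    (hn : ∀ Pt ∈ Ps, n Pt ∈ Pt) : IsNomineeSet Ps (Ps.image n) := by
  intro Pt hPt
  rw [Finset.card_eq_one]
  refine ⟨n Pt, Finset.eq_singleton_iff_unique_mem.2 ⟨?_, ?_⟩⟩
  · exact Finset.mem_inter.2 ⟨Finset.mem_image_of_mem n hPt, hn Pt hPt⟩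
  · simp only [Finset.mem_inter, Finset.mem_image]
    rintro _ ⟨⟨Pt', hPt', rfl⟩, hc⟩
    rw [hpart.eq_of_mem hPt' hPt (hn Pt' hPt') hc]

theorem sum_le_sum_image {M : Type*} [AddCommMonoid M] [Preorder M] [AddLeftMono M]
    (hpart : IsPartition Ps) {S : Finset C} (hS : IsNomineeSet Ps S) {n : Finset C → C}
    (hn : ∀ Pt ∈ Ps, n Pt ∈ Pt) {f : C → M} (h : ∀ Pt ∈ Ps, ∀ c ∈ S ∩ Pt, f c ≤ f (n Pt)) :
    ∑ c ∈ S, f c ≤ ∑ c ∈ Ps.image n, f c := by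
  rw [hpart.sum_eq_sum_sum_inter S, hpart.sum_eq_sum_sum_inter (Ps.image n)]
  refine Finset.sum_le_sum fun Pt hPt => ?_
  obtain ⟨c, hc⟩ := Finset.card_eq_one.1 (hS Pt hPt)
  rw [hc, (hpart.isNomineeSet_image hn).inter_eq_singleton hPt (Finset.mem_image_of_mem n hPt)
    (hn Pt hPt), Finset.sum_singleton, Finset.sum_singleton]
  exact h Pt hPt c (hc ▸ Finset.mem_singleton_self c)

end IsPartition

theorem Finset.image_update_update {α β : Type*} [DecidableEq α] [DecidableEq β]
    {s : Finset α} {a b : α} (ha : a ∈ s) (hb : b ∈ s) (hab : b ≠ a) (f : α → β) (x y : β) :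
    s.image (Function.update (Function.update f b y) a x)
      = insert x (insert y ((s \ {a, b}).image f)) := by
  have hs : s = insert a (insert b (s \ {a, b})) := by grind
  conv_lhs => rw [hs]
  rw [Finset.image_insert, Finset.image_insert, Function.update_self, Function.update_of_ne hab,
    Function.update_self]
  refine congrArg _ (congrArg _ (Finset.image_congr fun i hi => ?_))
  grind

section Borda

variable {C V : Type*} [Fintype V] (pref : V → C → C → Prop)

def bordaGapAt (p w c : C) : ℤ :=
  ((Finset.univ.filter fun v : V => pref v w c).card : ℤ)
    - ((Finset.univ.filter fun v : V => pref v p c).card : ℤ)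

theorem bordaScore_sub_bordaScore (p w : C) (S : Finset C) :
    (bordaScore pref S w : ℤ) - (bordaScore pref S p : ℤ) = ∑ c ∈ S, bordaGapAt pref p w c := by
  simp only [bordaScore, bordaGapAt, Finset.card_filter]
  push_cast
  rw [Finset.sum_sub_distrib]
  congr 1 <;> exact Finset.sum_comm

theorem ite_sub_ite_eq_of_ne {r : C → C → Prop} [IsStrictTotalOrder C r] {p w c : C}
    (hcp : c ≠ p) (hcw : c ≠ w) :
    ((if r w c then 1 else 0 : ℤ) - if r p c then 1 else 0)
      = (if r w c ∧ r c p then 1 else 0) - if r p c ∧ r c w then 1 else 0 := by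
  rcases (trichotomous_of r c p).imp_right (·.resolve_left hcp) with h1 | h1 <;>
  rcases (trichotomous_of r c w).imp_right (·.resolve_left hcw) with h2 | h2 <;>
  simp [h1, h2, asymm h1, asymm h2]

theorem bordaGapAt_eq_delta (hpref : ∀ v : V, IsStrictTotalOrder C (pref v)) {p w c : C}
    (hcp : c ≠ p) (hcw : c ≠ w) : bordaGapAt pref p w c = delta pref p w c := by
  simp only [bordaGapAt, delta, Finset.card_filter]
  push_cast
  rw [← Finset.sum_sub_distrib, ← Finset.sum_sub_distrib]
  exact Finset.sum_congr rfl fun v _ => have := hpref v; ite_sub_ite_eq_of_ne hcp hcw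

end Borda

theorem bordaGapAt_le_of_delta_le {C V : Type*} [Fintype C] [Fintype V]
    {pref : V → C → C → Prop} (hpref : ∀ v : V, IsStrictTotalOrder C (pref v))
    {Ps : Finset (Finset C)} (hpart : IsPartition Ps) {P Pw Pt : Finset C} (hP : P ∈ Ps)
    (hPw : Pw ∈ Ps) (hPt : Pt ∈ Ps \ {P, Pw}) {p w c d : C} (hp : p ∈ P) (hw : w ∈ Pw)
    (hc : c ∈ Pt) (hd : d ∈ Pt) (hcd : delta pref p w c ≤ delta pref p w d) :
    bordaGapAt pref p w c ≤ bordaGapAt pref p w d := by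
  simp only [Finset.mem_sdiff, Finset.mem_insert, Finset.mem_singleton, not_or] at hPt
  obtain ⟨hPt, hPtP, hPtPw⟩ := hPt
  have hne : ∀ e ∈ Pt, e ≠ p ∧ e ≠ w := fun e he =>
    ⟨fun h => hPtP (hpart.eq_of_mem hPt hP he (h ▸ hp)),
      fun h => hPtPw (hpart.eq_of_mem hPt hPw he (h ▸ hw))⟩
  rwa [bordaGapAt_eq_delta pref hpref (hne c hc).1 (hne c hc).2,
    bordaGapAt_eq_delta pref hpref (hne d hd).1 (hne d hd).2]

/-- nominating, from each party other than `P` and `P_w`, a candidate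
maximizing `Δ` yields a reduced election in which the Borda score advantage of `w`
over `p` is at least as large as in any reduced election containing `p` and `w`. -/
theorem greedy_nomination_maximizes_borda_gap
    {C V : Type*} [Fintype C] [Fintype V]
    (pref : V → C → C → Prop) (hpref : ∀ v : V, IsStrictTotalOrder C (pref v))
    (Ps : Finset (Finset C)) (hpart : IsPartition Ps)
    (P Pw : Finset C) (hP : P ∈ Ps) (hPw : Pw ∈ Ps) (hPPw : Pw ≠ P)
    (p w : C) (hp : p ∈ P) (hw : w ∈ Pw)
    (ch : Finset C → C)
    (hch : ∀ Pt ∈ Ps \ {P, Pw},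
      ch Pt ∈ Pt ∧ ∀ c ∈ Pt, delta pref p w c ≤ delta pref p w (ch Pt))
    (C' : Finset C) (hC' : IsNomineeSet Ps C') (hpC' : p ∈ C') (hwC' : w ∈ C') :
    (bordaScore pref C' w : ℤ) - (bordaScore pref C' p : ℤ)
      ≤ (bordaScore pref (insert p (insert w ((Ps \ {P, Pw}).image ch))) w : ℤ)
        - (bordaScore pref (insert p (insert w ((Ps \ {P, Pw}).image ch))) p : ℤ) := by
  set n := Function.update (Function.update ch Pw w) P p
  have hn_of_mem : ∀ Pt ∈ Ps \ {P, Pw}, n Pt = ch Pt := fun Pt hPt => by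
    simp only [Finset.mem_sdiff, Finset.mem_insert, Finset.mem_singleton, not_or] at hPt
    exact (Function.update_of_ne hPt.2.1 ..).trans (Function.update_of_ne hPt.2.2 ..)
  have hn_of_not_mem : ∀ Pt ∈ Ps, Pt ∉ Ps \ {P, Pw} → n Pt ∈ C' ∩ Pt := by
    intro Pt hPt hPt'
    obtain rfl | rfl : Pt = P ∨ Pt = Pw := by
      by_contra! h
      exact hPt' (by simp [hPt, h.1, h.2])
    · simpa [n] using ⟨hpC', hp⟩
    · simpa [n, hPPw] using ⟨hwC', hw⟩
  have hn : ∀ Pt ∈ Ps, n Pt ∈ Pt := fun Pt hPt => by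
    by_cases hPt' : Pt ∈ Ps \ {P, Pw}
    · exact hn_of_mem Pt hPt' ▸ (hch Pt hPt').1
    · exact (Finset.mem_inter.1 (hn_of_not_mem Pt hPt hPt')).2
  rw [← Finset.image_update_update hP hPw hPPw, bordaScore_sub_bordaScore,
    bordaScore_sub_bordaScore]
  refine hpart.sum_le_sum_image hC' hn fun Pt hPt c hc => ?_
  by_cases hPt' : Pt ∈ Ps \ {P, Pw}
  · have hcPt := (Finset.mem_inter.1 hc).2
    rw [hn_of_mem Pt hPt']
    exact bordaGapAt_le_of_delta_le hpref hpart hP hPw hPt' hp hw hcPt (hch Pt hPt').1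
      ((hch Pt hPt').2 c hcPt)
  · obtain ⟨hnC', hnPt⟩ := Finset.mem_inter.1 (hn_of_not_mem Pt hPt hPt')
    rw [hC'.inter_eq_singleton hPt hnC' hnPt, Finset.mem_singleton] at hc
    rw [hc]
end
end

section
/- Let E be an election over candidate set C with party partition 𝒫 and let p ∈ P ∈ 𝒫. Then p is a necessary president under the Borda rule if and only if for every candidate w ∈ C \ P, writing P_w for the party of w and Δ(c) = |{v ∈ V : w ≻_v c ≻_v p}| − |{v ∈ V : p ≻_v c ≻_v w}|, it holds that Σ_{P̃ ∈ 𝒫 \ {P, P_w}} max_{c ∈ P̃} Δ(c) + |{v ∈ V : w ≻_v p}| − |{v ∈ V : p ≻_v w}| ≤ 0. -/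
open scoped Classical

noncomputable section

/-- `p` is a winner of every reduced election containing `p`, under the Borda rule. -/
def NecessaryPresidentBorda {C V : Type*} [Fintype V] (pref : V → C → C → Prop)
    (Ps : Finset (Finset C)) (p : C) : Prop :=
  ∀ C' : Finset C, IsNomineeSet Ps C' → p ∈ C' →
    ∀ c ∈ C', bordaScore pref C' c ≤ bordaScore pref C' p

section helpers
variable {C V : Type*} [Fintype V] {pref : V → C → C → Prop}

lemma f_eq_delta (hpref : ∀ v : V, IsStrictTotalOrder C (pref v))
    {p w c : C} (hcp : c ≠ p) (hcw : c ≠ w) :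
    ((Finset.univ.filter fun v => pref v w c).card : ℤ)
      - ((Finset.univ.filter fun v => pref v p c).card : ℤ)
      = delta pref p w c := by
  unfold delta
  simp only [Finset.card_filter]
  push_cast
  rw [← Finset.sum_sub_distrib, ← Finset.sum_sub_distrib]
  refine Finset.sum_congr rfl fun v _ => ?_
  haveI := hpref v
  have asymm : ∀ a b : C, pref v a b → ¬ pref v b a := fun a b h h' =>
    (irrefl_of (pref v) a) (trans_of (pref v) h h')
  have tri : ∀ a b : C, a ≠ b → ¬ pref v a b → pref v b a := fun a b hab h => by
    rcases trichotomous_of (pref v) a b with h1 | h1 | h1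
    · exact absurd h1 h
    · exact absurd h1 hab
    · exact h1
  by_cases h1 : pref v w c <;> by_cases h2 : pref v p c
  · simp [h1, h2, asymm _ _ h1, asymm _ _ h2]
  · have := tri p c (Ne.symm hcp) h2
    simp [h1, h2, this]
  · have := tri w c (Ne.symm hcw) h1
    simp [h1, h2, this]
  · simp [h1, h2]

lemma borda_sub (p w : C) (C' : Finset C) :
    (bordaScore pref C' w : ℤ) - bordaScore pref C' p
      = ∑ c ∈ C', (((Finset.univ.filter fun v => pref v w c).card : ℤ)
          - ((Finset.univ.filter fun v => pref v p c).card : ℤ)) := by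
  unfold bordaScore
  simp only [Finset.card_filter]
  push_cast
  rw [Finset.sum_sub_distrib]
  congr 1 <;> exact Finset.sum_comm

lemma score_diff (hpref : ∀ v : V, IsStrictTotalOrder C (pref v))
    {p w : C} (hpw : p ≠ w) {C' : Finset C} (hpC : p ∈ C') (hwC : w ∈ C') :
    (bordaScore pref C' w : ℤ) - bordaScore pref C' p
      = (∑ c ∈ C' \ {p, w}, delta pref p w c)
        + ((Finset.univ.filter fun v : V => pref v w p).card : ℤ)
        - ((Finset.univ.filter fun v : V => pref v p w).card : ℤ) := by
  rw [borda_sub]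
  have hsub : ({p, w} : Finset C) ⊆ C' := by
    intro x hx; rcases Finset.mem_insert.mp hx with h | h
    · exact h ▸ hpC
    · exact (Finset.mem_singleton.mp h) ▸ hwC
  rw [← Finset.sum_sdiff hsub]
  have h1 : ∑ c ∈ C' \ {p, w},
      (((Finset.univ.filter fun v => pref v w c).card : ℤ)
        - ((Finset.univ.filter fun v => pref v p c).card : ℤ))
      = ∑ c ∈ C' \ {p, w}, delta pref p w c := by
    refine Finset.sum_congr rfl fun c hc => ?_
    have := Finset.mem_sdiff.mp hc
    simp only [Finset.mem_insert, Finset.mem_singleton, not_or] at this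
    exact f_eq_delta hpref this.2.1 this.2.2
  rw [h1, Finset.sum_pair hpw]
  have hpp : (Finset.univ.filter fun v : V => pref v p p) = ∅ := by
    refine Finset.filter_false_of_mem fun v _ => ?_
    haveI := hpref v; exact irrefl_of (pref v) p
  have hww : (Finset.univ.filter fun v : V => pref v w w) = ∅ := by
    refine Finset.filter_false_of_mem fun v _ => ?_
    haveI := hpref v; exact irrefl_of (pref v) w
  rw [hpp, hww]
  simp
  ring

end helpers

/-- characterization of necessary presidents under the Borda rule. -/
theorem necessary_president_borda_iff
    {C V : Type*} [Fintype C] [Fintype V]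
    (pref : V → C → C → Prop) (hpref : ∀ v : V, IsStrictTotalOrder C (pref v))
    (Ps : Finset (Finset C)) (hpart : IsPartition Ps)
    (P : Finset C) (hP : P ∈ Ps) (p : C) (hp : p ∈ P) :
    NecessaryPresidentBorda pref Ps p ↔
      ∀ w : C, w ∉ P → ∀ Pw ∈ Ps, w ∈ Pw →
        (∑ Pt ∈ (Ps \ {P, Pw}).attach,
            Pt.1.sup' (hpart.1 Pt.1 (Finset.mem_sdiff.mp Pt.2).1) (delta pref p w))
          + ((Finset.univ.filter fun v : V => pref v w p).card : ℤ)
          - ((Finset.univ.filter fun v : V => pref v p w).card : ℤ) ≤ 0 := by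
  classical
  -- uniqueness of party
  have huniq : ∀ {c : C} {P1 P2 : Finset C}, P1 ∈ Ps → c ∈ P1 → P2 ∈ Ps → c ∈ P2 → P1 = P2 := by
    intro c P1 P2 h1 hc1 h2 hc2
    obtain ⟨Q, _, hQu⟩ := hpart.2 c
    rw [hQu P1 ⟨h1, hc1⟩, hQu P2 ⟨h2, hc2⟩]
  -- nominee singleton : if x ∈ C' ∩ Pt and card (C'∩Pt) = 1 then C'∩Pt = {x}
  have hsing : ∀ {C' Pt : Finset C} {x : C}, IsNomineeSet Ps C' → Pt ∈ Ps →
      x ∈ C' → x ∈ Pt → C' ∩ Pt = {x} := by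
    intro C' Pt x hC' hPt hx1 hx2
    obtain ⟨a, ha⟩ := Finset.card_eq_one.mp (hC' Pt hPt)
    have hxm : x ∈ C' ∩ Pt := Finset.mem_inter.mpr ⟨hx1, hx2⟩
    rw [ha] at hxm ⊢
    rw [Finset.mem_singleton.mp hxm]
  constructor
  · -- necessary → condition
    intro hnec w hwP Pw hPw hwPw
    have hPPw : P ≠ Pw := fun h => hwP (h ▸ hwPw)
    have hpw : p ≠ w := fun h => hwP (h ▸ hp)
    set S := Ps \ {P, Pw} with hS
    -- choose maximizers
    have hex : ∀ Pt : {x // x ∈ S}, ∃ c ∈ Pt.1,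
        Pt.1.sup' (hpart.1 Pt.1 (Finset.mem_sdiff.mp Pt.2).1) (delta pref p w)
          = delta pref p w c :=
      fun Pt => Finset.exists_mem_eq_sup' _ _
    set g : {x // x ∈ S} → C := fun Pt => (hex Pt).choose with hg
    have hg1 : ∀ Pt, g Pt ∈ Pt.1 := fun Pt => (hex Pt).choose_spec.1
    have hg2 : ∀ Pt : {x // x ∈ S},
        Pt.1.sup' (hpart.1 Pt.1 (Finset.mem_sdiff.mp Pt.2).1) (delta pref p w)
          = delta pref p w (g Pt) := fun Pt => (hex Pt).choose_spec.2
    have hSPs : ∀ Pt : {x // x ∈ S}, Pt.1 ∈ Ps ∧ Pt.1 ≠ P ∧ Pt.1 ≠ Pw := by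
      intro Pt
      have := Finset.mem_sdiff.mp Pt.2
      simp only [Finset.mem_insert, Finset.mem_singleton, not_or] at this
      exact ⟨this.1, this.2.1, this.2.2⟩
    set T := S.attach.image g with hT
    set C' := insert p (insert w T) with hC'
    have hpT : p ∉ T := by
      intro h
      obtain ⟨Q, _, hQ⟩ := Finset.mem_image.mp h
      exact (hSPs Q).2.1 (huniq (hSPs Q).1 (hQ ▸ hg1 Q) hP hp)
    have hwT : w ∉ T := by
      intro h
      obtain ⟨Q, _, hQ⟩ := Finset.mem_image.mp h
      exact (hSPs Q).2.2 (huniq (hSPs Q).1 (hQ ▸ hg1 Q) hPw hwPw)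
    have hpC : p ∈ C' := Finset.mem_insert_self _ _
    have hwC : w ∈ C' := Finset.mem_insert_of_mem (Finset.mem_insert_self _ _)
    have hmemC' : ∀ x, x ∈ C' ↔ x = p ∨ x = w ∨ ∃ Q, g Q = x := by
      intro x
      simp only [hC', Finset.mem_insert, hT, Finset.mem_image]
      constructor
      · rintro (h | h | ⟨Q, _, hQ⟩)
        · exact Or.inl h
        · exact Or.inr (Or.inl h)
        · exact Or.inr (Or.inr ⟨Q, hQ⟩)
      · rintro (h | h | ⟨Q, hQ⟩)
        · exact Or.inl h
        · exact Or.inr (Or.inl h)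
        · exact Or.inr (Or.inr ⟨Q, Finset.mem_attach _ _, hQ⟩)
    -- C' is a nominee set
    have hnom : IsNomineeSet Ps C' := by
      intro Pt hPt
      by_cases h1 : Pt = P
      · subst h1
        have : C' ∩ Pt = {p} := by
          apply Finset.Subset.antisymm
          · intro x hx
            obtain ⟨hx1, hx2⟩ := Finset.mem_inter.mp hx
            rcases (hmemC' x).mp hx1 with h | h | ⟨Q, hQ⟩
            · exact Finset.mem_singleton.mpr h
            · exact absurd (h ▸ hx2) hwP
            · exact absurd (huniq (hSPs Q).1 (hQ ▸ hg1 Q) hPt hx2) (hSPs Q).2.1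
          · intro x hx
            rw [Finset.mem_singleton.mp hx]
            exact Finset.mem_inter.mpr ⟨hpC, hp⟩
        rw [this, Finset.card_singleton]
      · by_cases h2 : Pt = Pw
        · subst h2
          have : C' ∩ Pt = {w} := by
            apply Finset.Subset.antisymm
            · intro x hx
              obtain ⟨hx1, hx2⟩ := Finset.mem_inter.mp hx
              rcases (hmemC' x).mp hx1 with h | h | ⟨Q, hQ⟩
              · exact absurd (huniq hPt (h ▸ hx2) hP hp) (Ne.symm hPPw)
              · exact Finset.mem_singleton.mpr h
              · exact absurd (huniq (hSPs Q).1 (hQ ▸ hg1 Q) hPt hx2) (hSPs Q).2.2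
            · intro x hx
              rw [Finset.mem_singleton.mp hx]
              exact Finset.mem_inter.mpr ⟨hwC, hwPw⟩
          rw [this, Finset.card_singleton]
        · have hPtS : Pt ∈ S := by
            rw [hS, Finset.mem_sdiff]
            exact ⟨hPt, by simp [h1, h2]⟩
          have : C' ∩ Pt = {g ⟨Pt, hPtS⟩} := by
            apply Finset.Subset.antisymm
            · intro x hx
              obtain ⟨hx1, hx2⟩ := Finset.mem_inter.mp hx
              rcases (hmemC' x).mp hx1 with h | h | ⟨Q, hQ⟩
              · exact absurd (huniq hPt (h ▸ hx2) hP hp) h1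
              · exact absurd (huniq hPt (h ▸ hx2) hPw hwPw) h2
              · have : Q.1 = Pt := huniq (hSPs Q).1 (hQ ▸ hg1 Q) hPt hx2
                have hQeq : Q = ⟨Pt, hPtS⟩ := Subtype.ext this
                rw [Finset.mem_singleton, ← hQ, hQeq]
            · intro x hx
              rw [Finset.mem_singleton.mp hx]
              refine Finset.mem_inter.mpr ⟨?_, hg1 _⟩
              exact (hmemC' _).mpr (Or.inr (Or.inr ⟨_, rfl⟩))
          rw [this, Finset.card_singleton]
    -- apply necessity
    have hle := hnec C' hnom hpC w hwC
    have hsd := score_diff hpref hpw hpC hwC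
    -- C' \ {p, w} = T
    have hCT : C' \ {p, w} = T := by
      ext x
      simp only [Finset.mem_sdiff, Finset.mem_insert, Finset.mem_singleton, hC', not_or]
      constructor
      · rintro ⟨h | h | h, hx1, hx2⟩
        · exact absurd h hx1
        · exact absurd h hx2
        · exact h
      · intro h
        refine ⟨Or.inr (Or.inr h), ?_, ?_⟩
        · rintro rfl; exact hpT h
        · rintro rfl; exact hwT h
    have hginj : Set.InjOn g S.attach := by
      intro Q _ Q' _ h
      have : Q.1 = Q'.1 := huniq (hSPs Q).1 (hg1 Q) (hSPs Q').1 (h ▸ hg1 Q')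
      exact Subtype.ext this
    have hsum : ∑ c ∈ C' \ {p, w}, delta pref p w c
        = ∑ Pt ∈ S.attach,
            Pt.1.sup' (hpart.1 Pt.1 (Finset.mem_sdiff.mp Pt.2).1) (delta pref p w) := by
      rw [hCT, hT, Finset.sum_image hginj]
      exact Finset.sum_congr rfl fun Pt _ => (hg2 Pt).symm
    rw [hsum] at hsd
    have : (bordaScore pref C' w : ℤ) - bordaScore pref C' p ≤ 0 := by
      have := hle
      omega
    linarith [hsd ▸ this]
  · -- condition → necessary
    intro hcond C' hC' hpC c hcC
    by_cases hcp : c = p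
    · exact hcp ▸ le_refl _
    have hCP : C' ∩ P = {p} := hsing hC' hP hpC hp
    have hcP : c ∉ P := by
      intro h
      have : c ∈ C' ∩ P := Finset.mem_inter.mpr ⟨hcC, h⟩
      exact hcp (Finset.mem_singleton.mp (hCP ▸ this))
    obtain ⟨Pc, ⟨hPcPs, hcPc⟩, _⟩ := hpart.2 c
    have key := hcond c hcP Pc hPcPs hcPc
    have hpc : p ≠ c := Ne.symm hcp
    have hsd := score_diff hpref hpc hpC hcC
    set S := Ps \ {P, Pc} with hS
    have hCPc : C' ∩ Pc = {c} := hsing hC' hPcPs hcC hcPc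
    -- decomposition
    have hbi : C' \ {p, c} = S.biUnion (fun Pt => C' ∩ Pt) := by
      ext x
      simp only [Finset.mem_sdiff, Finset.mem_insert, Finset.mem_singleton, not_or,
        Finset.mem_biUnion, hS, Finset.mem_inter]
      constructor
      · rintro ⟨hx, hxp, hxc⟩
        obtain ⟨Px, ⟨hPxPs, hxPx⟩, _⟩ := hpart.2 x
        refine ⟨Px, ⟨hPxPs, ?_, ?_⟩, hx, hxPx⟩
        · rintro rfl
          exact hxp (Finset.mem_singleton.mp (hCP ▸ Finset.mem_inter.mpr ⟨hx, hxPx⟩))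
        · rintro rfl
          exact hxc (Finset.mem_singleton.mp (hCPc ▸ Finset.mem_inter.mpr ⟨hx, hxPx⟩))
      · rintro ⟨Pt, ⟨hPt, hPt2⟩, hx, hxPt⟩
        refine ⟨hx, ?_, ?_⟩
        · rintro rfl
          exact hPt2.1 (huniq hPt hxPt hP hp)
        · rintro rfl
          exact hPt2.2 (huniq hPt hxPt hPcPs hcPc)
    have hdisj : (↑S : Set (Finset C)).PairwiseDisjoint (fun Pt => C' ∩ Pt) := by
      intro P1 h1 P2 h2 h12
      have h1' := (Finset.mem_sdiff.mp h1).1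
      have h2' := (Finset.mem_sdiff.mp h2).1
      simp only [Finset.disjoint_left]
      intro x hx1 hx2
      have := huniq h1' (Finset.mem_inter.mp hx1).2 h2' (Finset.mem_inter.mp hx2).2
      exact h12 this
    have hsum : ∑ x ∈ C' \ {p, c}, delta pref p c x
        ≤ ∑ Pt ∈ S.attach,
            Pt.1.sup' (hpart.1 Pt.1 (Finset.mem_sdiff.mp Pt.2).1) (delta pref p c) := by
      rw [hbi, Finset.sum_biUnion hdisj, ← Finset.sum_attach S (fun Pt => ∑ x ∈ C' ∩ Pt, delta pref p c x)]
      refine Finset.sum_le_sum fun Pt _ => ?_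
      have hPtPs := (Finset.mem_sdiff.mp Pt.2).1
      obtain ⟨a, ha⟩ := Finset.card_eq_one.mp (hC' Pt.1 hPtPs)
      rw [ha, Finset.sum_singleton]
      have haPt : a ∈ Pt.1 := by
        have : a ∈ C' ∩ Pt.1 := ha ▸ Finset.mem_singleton_self a
        exact (Finset.mem_inter.mp this).2
      exact Finset.le_sup' _ haPt
    have hfinal : (bordaScore pref C' c : ℤ) - bordaScore pref C' p ≤ 0 := by
      rw [hsd]; linarith
    have := hfinal
    omega
end
end

section
/- Let ℓ ≥ 1 and a_1 ≥ a_2 ≥ … ≥ a_ℓ > 0, and use in every reduced election with t nominees the scoring vector (a_1, …, a_ℓ, 0, …, 0) of length t. Let φ be a (2,2)-E3-SAT formula with clauses C_1, …, C_m (m ≥ 2) over variables x_1, …, x_n. Construct the election with parties P = {p}, P_w = {w}, X_i = {x_i, x̄_i} for each i ∈ [n], and 4(ℓ−1) further singleton parties whose members are grouped into four sets D_1, D_2, D_3, D_4 of size ℓ−1 each; and with 6m+3 voters: one voter with order D_1 ≻ w ≻ [rest]; 2m+1 voters with order w ≻ D_2 ≻ [rest]; 2m+1 voters with order p ≻ D_3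 ≻ [rest]; and for each j ∈ [m] two voters with order y_j^1 ≻ y_j^2 ≻ y_j^3 ≻ D_4 ≻ p ≻ [rest], where each set D_h stands for its elements in some fixed order and [rest] denotes all remaining candidates in an arbitrary order. Then, for every choice of these arbitrary orders, p is a necessary president in this election if and only if φ is unsatisfiable. -/
open scoped Classical

noncomputable section

/-- Candidates: the distinguished candidate `p`, the candidate `w`, a candidate for
each literal `x_i` / `x̄_i`, and four groups of `ℓ−1` dummies each. -/
inductive SCand (n ℓ : ℕ) where
  | pp : SCand n ℓ
  | ww : SCand n ℓ
  | lit : Fin n → Bool → SCand n ℓ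
  | dum : Fin 4 → Fin (ℓ - 1) → SCand n ℓ
  deriving DecidableEq, Fintype

/-- Voters: the voter `w`, `2m+1` voters of kind `v0`, `2m+1` voters of kind `v0'`,
and two voters `u_j`, `u'_j` for every clause `j`; `6m+3` voters in total. -/
inductive SVoter (m : ℕ) where
  | w0 : SVoter m
  | v0 : Fin (2 * m + 1) → SVoter m
  | v0' : Fin (2 * m + 1) → SVoter m
  | u : Fin m → Bool → SVoter m
  deriving DecidableEq, Fintype

variable {n m ℓ : ℕ}

/-- For each voter, the index of the block of candidates a candidate belongs to in
that voter's preference order (blocks are linearly ordered; the order inside a block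
is arbitrary).  `cl j k` is the `k`-th literal of clause `j`. -/
def sgrp (cl : Fin m → Fin 3 → Fin n × Bool) : SVoter m → SCand n ℓ → ℕ
  | .w0, .dum h _ => if h = 0 then 0 else 2
  | .w0, .ww => 1
  | .w0, _ => 2
  | .v0 _, .ww => 0
  | .v0 _, .dum h _ => if h = 1 then 1 else 2
  | .v0 _, _ => 2
  | .v0' _, .pp => 0
  | .v0' _, .dum h _ => if h = 2 then 1 else 2
  | .v0' _, _ => 2
  | .u j _, .lit x b =>
      if cl j 0 = (x, b) then 0
      else if cl j 1 = (x, b) then 1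
      else if cl j 2 = (x, b) then 2
      else 5
  | .u _ _, .dum h _ => if h = 3 then 3 else 5
  | .u _ _, .pp => 4
  | .u _ _, .ww => 5

/-- Each candidate is sent to the index of its party. -/
def srep : SCand n ℓ → Unit ⊕ Unit ⊕ Fin n ⊕ (Fin 4 × Fin (ℓ - 1))
  | .pp => Sum.inl ()
  | .ww => Sum.inr (Sum.inl ())
  | .lit x _ => Sum.inr (Sum.inr (Sum.inl x))
  | .dum h d => Sum.inr (Sum.inr (Sum.inr (h, d)))

/-- The parties: `{p}`, `{w}`, `X_i = {x_i, x̄_i}`, and singleton dummy parties. -/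
def sparties (n ℓ : ℕ) : Finset (Finset (SCand n ℓ)) :=
  Finset.univ.image fun c => Finset.univ.filter fun c' => srep c' = srep c

/-- Score of `c` over the nominee set `C'` for the scoring vector
`(a 0, a 1, …)`, where `a k` is the number of points a voter gives to a candidate
preceded by exactly `k` nominees in her preference order. -/
def posScore {C V : Type*} [Fintype V] (a : ℕ → ℤ) (pref : V → C → C → Prop)
    (C' : Finset C) (c : C) : ℤ :=
  ∑ v : V, a ((C'.filter fun c' => pref v c' c).card)

/-- `p` is a winner of every reduced election containing `p`. -/
def NecessaryPresident {C V : Type*} [Fintype V] (a : ℕ → ℤ)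
    (pref : V → C → C → Prop) (Ps : Finset (Finset C)) (p : C) : Prop :=
  ∀ C' : Finset C, IsNomineeSet Ps C' → p ∈ C' →
    ∀ c ∈ C', posScore a pref C' c ≤ posScore a pref C' p

/-!
A reduced election nominates `p`, `w`, every dummy and one literal of each variable, so it is the
election `nominees σ` of an assignment `σ`. Each voter ranks her favourite (`w` or `p`) and a
group of `ℓ - 1` dummies above her `[rest]`, so the candidates there get no points from her. Hence
`w` scores `a_ℓ + (2m+1) a_1`, every literal and every dummy at most `(2m+1) a_1`, and `p` gets
`a_1` from each of the `2m+1` voters `p ≻ D_3 ≻ …`; from the two voters of clause `C_j` it gets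
nothing if `σ` satisfies `C_j` and at least `a_ℓ` each otherwise. So `p` beats or ties everybody
under `σ` iff `σ` falsifies some clause.
-/

open Finset

section StrictOrderByBlocks

variable {C : Type*} {r : C → C → Prop} {g : C → ℕ}

theorem card_le_card_filter_of_lt (hord : ∀ c c', g c < g c' → r c c') {S C' : Finset C}
    {c : C} (hS : S ⊆ C') (hlt : ∀ c' ∈ S, g c' < g c) : #S ≤ #(C'.filter (r · c)) :=
  card_le_card fun c' hc' => mem_filter.2 ⟨hS hc', hord c' c (hlt c' hc')⟩

theorem card_filter_le_card_of_le [Std.Asymm r] (hord : ∀ c c', g c < g c' → r c c')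
    {T C' : Finset C} {c : C} (hT : ∀ c' ∈ C', c' ≠ c → g c' ≤ g c → c' ∈ T) :
    #(C'.filter (r · c)) ≤ #T :=
  card_le_card fun c' hc' =>
    have ⟨hc'C, hr⟩ := mem_filter.1 hc'
    hT c' hc'C (ne_of_irrefl hr) (not_lt.1 fun h => asymm hr (hord c c' h))

end StrictOrderByBlocks

theorem antitone_of_short_scoring {α : Type*} [Preorder α] [Zero α] {a : ℕ → α} {ℓ : ℕ}
    (hanti : ∀ i j : ℕ, i ≤ j → j < ℓ → a j ≤ a i) (hpos : 0 < a (ℓ - 1))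
    (hzero : ∀ k : ℕ, ℓ ≤ k → a k = 0) : Antitone a := by
  intro i j hij
  rcases lt_or_ge j ℓ with hj | hj
  · exact hanti i j hij hj
  · rw [hzero j hj]
    rcases lt_or_ge i ℓ with hi | hi
    · exact hpos.le.trans (hanti i (ℓ - 1) (by omega) (by omega))
    · rw [hzero i hi]

theorem Antitone.nonneg_of_eventually_zero {α : Type*} [Preorder α] [Zero α] {a : ℕ → α} {ℓ : ℕ}
    (ha : Antitone a) (hzero : ∀ k : ℕ, ℓ ≤ k → a k = 0) (k : ℕ) : 0 ≤ a k :=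
  hzero (k + ℓ) (by omega) ▸ ha (by omega)

theorem isNomineeSet_sparties_iff {C' : Finset (SCand n ℓ)} :
    IsNomineeSet (sparties n ℓ) C' ↔ ∀ c, ∃! c', c' ∈ C' ∧ srep c' = srep c := by
  simp only [IsNomineeSet, sparties, mem_image, mem_univ, true_and, forall_exists_index,
    forall_apply_eq_imp_iff, inter_filter, inter_univ, card_eq_one_iff_existsUnique, mem_filter]

def SCand.Nominated (σ : Fin n → Bool) : SCand n ℓ → Prop
  | lit x b => σ x = b
  | _ => True

def nominees (σ : Fin n → Bool) : Finset (SCand n ℓ) :=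
  univ.filter (SCand.Nominated σ)

@[simp]
theorem mem_nominees {σ : Fin n → Bool} {c : SCand n ℓ} :
    c ∈ nominees σ ↔ c.Nominated σ := by
  simp [nominees]

theorem isNomineeSet_nominees (σ : Fin n → Bool) :
    IsNomineeSet (sparties n ℓ) (nominees σ) := by
  rw [isNomineeSet_sparties_iff]
  rintro (_ | _ | ⟨x, b⟩ | ⟨h, d⟩)
  · exact ⟨.pp, by simp [SCand.Nominated], fun c' ⟨_, hc'⟩ => by cases c' <;> simp_all [srep]⟩
  · exact ⟨.ww, by simp [SCand.Nominated], fun c' ⟨_, hc'⟩ => by cases c' <;> simp_all [srep]⟩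
  · exact ⟨.lit x (σ x), by simp [SCand.Nominated, srep],
      fun c' ⟨hc, hc'⟩ => by cases c' <;> simp_all [srep, SCand.Nominated]⟩
  · exact ⟨.dum h d, by simp [SCand.Nominated], fun c' ⟨_, hc'⟩ => by cases c' <;> simp_all [srep]⟩

theorem exists_eq_nominees {C' : Finset (SCand n ℓ)} (hC : IsNomineeSet (sparties n ℓ) C') :
    ∃ σ : Fin n → Bool, C' = nominees σ := by
  rw [isNomineeSet_sparties_iff] at hC
  refine ⟨fun x => decide (.lit x true ∈ C'), ?_⟩
  ext c
  obtain ⟨c', ⟨hc'C, hc'⟩, huniq⟩ := hC c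
  cases c with
  | lit x b =>
    obtain ⟨b₀, rfl⟩ : ∃ b₀, c' = .lit x b₀ := by cases c' <;> simp_all [srep]
    have hmem : ∀ b', SCand.lit x b' ∈ C' ↔ b' = b₀ := fun b' =>
      ⟨fun h => by simpa using huniq _ ⟨h, by simp [srep]⟩, by rintro rfl; exact hc'C⟩
    simp only [hmem, mem_nominees, SCand.Nominated]
    cases b <;> cases b₀ <;> simp
  | _ => cases c' <;> simp_all [srep, SCand.Nominated]

namespace SVoter

/- Voter `v` ranks `v.top` and the dummies `dum v.kind _` (the paper's `D_{v.kind + 1}`) in blocks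
below `v.lastBlock`, the block of her `[rest]`. -/
def kind : SVoter m → Fin 4
  | w0 => 0
  | v0 _ => 1
  | v0' _ => 2
  | u _ _ => 3

def top : SVoter m → SCand n ℓ
  | w0 | v0 _ => .ww
  | v0' _ | u _ _ => .pp

def lastBlock : SVoter m → ℕ
  | u _ _ => 5
  | _ => 2

def equivSum (m : ℕ) : SVoter m ≃ Unit ⊕ Fin (2 * m + 1) ⊕ Fin (2 * m + 1) ⊕ Fin m × Bool where
  toFun
    | w0 => .inl ()
    | v0 i => .inr (.inl i)
    | v0' i => .inr (.inr (.inl i))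
    | u j b => .inr (.inr (.inr (j, b)))
  invFun
    | .inl _ => w0
    | .inr (.inl i) => v0 i
    | .inr (.inr (.inl i)) => v0' i
    | .inr (.inr (.inr (j, b))) => u j b
  left_inv v := by cases v <;> rfl
  right_inv s := by rcases s with _ | _ | _ | ⟨j, b⟩ <;> rfl

theorem sum_eq {M : Type*} [AddCommMonoid M] (f : SVoter m → M) :
    ∑ v, f v = f w0 + ∑ i, f (v0 i) + ∑ i, f (v0' i) + ∑ j, (f (u j true) + f (u j false)) := by
  rw [← (equivSum m).symm.sum_comp]
  simp only [Fintype.sum_sum_type, Fintype.sum_prod_type, Fintype.sum_bool, Fintype.sum_unique,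
    equivSum, Equiv.coe_fn_symm_mk, add_assoc]

theorem card_filter_kind_le (h : Fin 4) :
    #(univ.filter fun v : SVoter m => v.kind = h) ≤ 2 * m + 1 := by
  rw [card_filter, sum_eq]
  fin_cases h <;> simp [kind]
  omega

end SVoter

def numAbove {C V : Type*} (pref : V → C → C → Prop) (C' : Finset C) (v : V) (c : C) : ℕ :=
  #(C'.filter fun c' => pref v c' c)

def dummies (n ℓ : ℕ) (h : Fin 4) : Finset (SCand n ℓ) := univ.image (SCand.dum h)

@[simp]
theorem mem_dummies {h : Fin 4} {c : SCand n ℓ} : c ∈ dummies n ℓ h ↔ ∃ d, c = .dum h d := by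
  simp [dummies, eq_comm]

theorem card_dummies (h : Fin 4) : #(dummies n ℓ h) = ℓ - 1 := by
  rw [dummies, card_image_of_injective _ fun _ _ hd => (SCand.dum.inj hd).2, card_univ,
    Fintype.card_fin]

section Election

variable {cl : Fin m → Fin 3 → Fin n × Bool} {pref : SVoter m → SCand n ℓ → SCand n ℓ → Prop}
  {σ : Fin n → Bool}

theorem le_numAbove_of_dummies_lt (hℓ : 1 ≤ ℓ)
    (hord : ∀ v c c', sgrp cl v c < sgrp cl v c' → pref v c c') {h : Fin 4} {v : SVoter m}
    {x c : SCand n ℓ} (hx : x.Nominated σ) (hxD : ∀ d, x ≠ .dum h d)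
    (hxc : sgrp cl v x < sgrp cl v c)
    (hDc : ∀ d : Fin (ℓ - 1), sgrp cl v (.dum h d) < sgrp cl v c) :
    ℓ ≤ numAbove pref (nominees σ) v c := by
  have hcard : #(insert x (dummies n ℓ h)) = ℓ := by
    rw [card_insert_of_notMem (by simpa using hxD), card_dummies]
    omega
  refine hcard.symm.le.trans <| card_le_card_filter_of_lt (hord v) ?_ ?_ <;>
    intro c' hc' <;> obtain rfl | ⟨d, rfl⟩ := mem_insert.1 hc' |>.imp_right mem_dummies.1
  exacts [by simpa using hx, by simp [SCand.Nominated], hxc, hDc d]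

theorem points_eq_zero_of_lastBlock {a : ℕ → ℤ} (hℓ : 1 ≤ ℓ) (hzero : ∀ k, ℓ ≤ k → a k = 0)
    (hord : ∀ v c c', sgrp cl v c < sgrp cl v c' → pref v c c') {v : SVoter m} {c : SCand n ℓ}
    (hc : sgrp cl v c = v.lastBlock) : a (numAbove pref (nominees σ) v c) = 0 := by
  refine hzero _ (le_numAbove_of_dummies_lt hℓ hord (h := v.kind) (x := v.top) ?_ ?_
    (hc ▸ ?_) fun d => hc ▸ ?_) <;>
    cases v <;> simp [sgrp, SVoter.top, SVoter.kind, SVoter.lastBlock, SCand.Nominated]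

theorem sgrp_lit_of_kind_ne {v : SVoter m} (hv : v.kind ≠ 3) (x : Fin n) (b : Bool) :
    sgrp cl v (.lit x b : SCand n ℓ) = v.lastBlock := by
  cases v <;> simp_all [sgrp, SVoter.kind, SVoter.lastBlock]

theorem sgrp_dum_of_kind_ne {v : SVoter m} {h : Fin 4} (hv : v.kind ≠ h) (d : Fin (ℓ - 1)) :
    sgrp cl v (.dum h d : SCand n ℓ) = v.lastBlock := by
  cases v <;> simp_all [sgrp, SVoter.kind, SVoter.lastBlock, eq_comm]

theorem numAbove_pp_v0' [∀ v, Std.Asymm (pref v)]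
    (hord : ∀ v c c', sgrp cl v c < sgrp cl v c' → pref v c c') (C' : Finset (SCand n ℓ))
    (i : Fin (2 * m + 1)) : numAbove pref C' (.v0' i) .pp = 0 :=
  Nat.eq_zero_of_le_zero <| card_filter_le_card_of_le (T := ∅) (hord _) fun c' _ hne hle => by
    cases c' <;> simp [sgrp, ite_eq_iff] at hne hle

theorem numAbove_ww_v0 [∀ v, Std.Asymm (pref v)]
    (hord : ∀ v c c', sgrp cl v c < sgrp cl v c' → pref v c c') (C' : Finset (SCand n ℓ))
    (i : Fin (2 * m + 1)) : numAbove pref C' (.v0 i) .ww = 0 :=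
  Nat.eq_zero_of_le_zero <| card_filter_le_card_of_le (T := ∅) (hord _) fun c' _ hne hle => by
    cases c' <;> simp [sgrp, ite_eq_iff] at hne hle

theorem numAbove_ww_w0 [∀ v, Std.Asymm (pref v)]
    (hord : ∀ v c c', sgrp cl v c < sgrp cl v c' → pref v c c') :
    numAbove pref (nominees σ) .w0 .ww = ℓ - 1 := by
  refine le_antisymm ?_ ?_ <;> rw [← card_dummies 0]
  · refine card_filter_le_card_of_le (hord _) fun c' _ hne hle => ?_
    cases c' <;> simp_all [sgrp, apply_ite (· ≤ 1)]
  · refine card_le_card_filter_of_lt (hord _) ?_ ?_ <;> intro c' hc' <;>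
      obtain ⟨d, rfl⟩ := mem_dummies.1 hc' <;> simp [sgrp, SCand.Nominated]

theorem sgrp_u_lit_le (j : Fin m) (b : Bool) (k : Fin 3) :
    sgrp cl (.u j b) (.lit (cl j k).1 (cl j k).2 : SCand n ℓ) ≤ 2 := by
  fin_cases k <;> simp [sgrp] <;> split_ifs <;> omega

theorem le_numAbove_pp_u_of_satisfied (hℓ : 1 ≤ ℓ)
    (hord : ∀ v c c', sgrp cl v c < sgrp cl v c' → pref v c c')
    {j : Fin m} {k : Fin 3} (hk : σ (cl j k).1 = (cl j k).2) (b : Bool) :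
    ℓ ≤ numAbove pref (nominees σ) (.u j b) .pp :=
  le_numAbove_of_dummies_lt hℓ hord (h := 3) (x := .lit (cl j k).1 (cl j k).2) hk (by simp)
    ((sgrp_u_lit_le j b k).trans_lt (by simp [sgrp])) fun d => by simp [sgrp]

theorem numAbove_pp_u_le_of_falsified [∀ v, Std.Asymm (pref v)]
    (hord : ∀ v c c', sgrp cl v c < sgrp cl v c' → pref v c c') {j : Fin m}
    (hj : ∀ k, σ (cl j k).1 ≠ (cl j k).2) (b : Bool) :
    numAbove pref (nominees σ) (.u j b) .pp ≤ ℓ - 1 := by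
  rw [← card_dummies 3]
  refine card_filter_le_card_of_le (hord _) fun c' hc' hne hle => ?_
  cases c' with
  | lit x b' =>
    simp only [sgrp] at hle
    have hx : σ x = b' := by simpa [SCand.Nominated] using hc'
    split_ifs at hle with h0 h1 h2
    · exact (hj 0 (by rwa [h0])).elim
    · exact (hj 1 (by rwa [h1])).elim
    · exact (hj 2 (by rwa [h2])).elim
    · omega
  | _ => simp_all [sgrp, apply_ite (· ≤ 4)]

end Election

section Scores

variable {cl : Fin m → Fin 3 → Fin n × Bool} {pref : SVoter m → SCand n ℓ → SCand n ℓ → Prop}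
  {σ : Fin n → Bool} {a : ℕ → ℤ}

theorem posScore_le_of_kind (ha : Antitone a) (ha0 : 0 ≤ a 0) {C' : Finset (SCand n ℓ)}
    {c : SCand n ℓ} (h : Fin 4)
    (hc : ∀ v : SVoter m, v.kind ≠ h → a (numAbove pref C' v c) = 0) :
    posScore a pref C' c ≤ (2 * m + 1) * a 0 :=
  calc posScore a pref C' c = ∑ v, a (numAbove pref C' v c) := rfl
    _ ≤ ∑ v : SVoter m, if v.kind = h then a 0 else 0 := sum_le_sum fun v _ => by
        split_ifs with hv
        · exact ha (Nat.zero_le _)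
        · exact (hc v hv).le
    _ = #(univ.filter fun v : SVoter m => v.kind = h) * a 0 := by
        rw [← sum_filter, sum_const, nsmul_eq_mul]
    _ ≤ (2 * m + 1) * a 0 := mul_le_mul_of_nonneg_right
        (by exact_mod_cast SVoter.card_filter_kind_le h) ha0

theorem posScore_le_of_ne (hℓ : 1 ≤ ℓ) (ha : Antitone a) (ha0 : 0 ≤ a 0)
    (hzero : ∀ k, ℓ ≤ k → a k = 0) (hord : ∀ v c c', sgrp cl v c < sgrp cl v c' → pref v c c')
    {c : SCand n ℓ} (hp : c ≠ .pp) (hw : c ≠ .ww) :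
    posScore a pref (nominees σ) c ≤ (2 * m + 1) * a 0 := by
  cases c with
  | pp => exact absurd rfl hp
  | ww => exact absurd rfl hw
  | lit x b => exact posScore_le_of_kind ha ha0 3 fun v hv =>
      points_eq_zero_of_lastBlock hℓ hzero hord (sgrp_lit_of_kind_ne hv x b)
  | dum h d => exact posScore_le_of_kind ha ha0 h fun v hv =>
      points_eq_zero_of_lastBlock hℓ hzero hord (sgrp_dum_of_kind_ne hv d)

theorem posScore_pp_le_of_satisfied (hℓ : 1 ≤ ℓ) (ha : Antitone a) (ha0 : 0 ≤ a 0)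
    (hzero : ∀ k, ℓ ≤ k → a k = 0) (hord : ∀ v c c', sgrp cl v c < sgrp cl v c' → pref v c c')
    (hσ : ∀ j, ∃ k, σ (cl j k).1 = (cl j k).2) :
    posScore a pref (nominees σ) .pp ≤ (2 * m + 1) * a 0 :=
  posScore_le_of_kind ha ha0 2 fun v hv => by
    cases v with
    | v0' => exact absurd rfl hv
    | u j b =>
      obtain ⟨k, hk⟩ := hσ j
      exact hzero _ (le_numAbove_pp_u_of_satisfied hℓ hord hk b)
    | _ => exact points_eq_zero_of_lastBlock hℓ hzero hord rfl

theorem le_posScore_pp_of_falsified [∀ v, Std.Asymm (pref v)] (ha : Antitone a) (ha0 : ∀ k, 0 ≤ a k)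
    (hord : ∀ v c c', sgrp cl v c < sgrp cl v c' → pref v c c') {j : Fin m}
    (hj : ∀ k, σ (cl j k).1 ≠ (cl j k).2) :
    (2 * m + 1) * a 0 + 2 * a (ℓ - 1) ≤ posScore a pref (nominees σ) .pp := by
  set f : SVoter m → ℤ := fun v => a (numAbove pref (nominees σ) v .pp)
  have hv0' : ∑ i, f (.v0' i) = (2 * m + 1) * a 0 := by
    simp [f, numAbove_pp_v0' hord]
  have hclause : 2 * a (ℓ - 1) ≤ f (.u j true) + f (.u j false) := by
    have := ha (numAbove_pp_u_le_of_falsified hord hj true)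
    have := ha (numAbove_pp_u_le_of_falsified hord hj false)
    simp only [f]
    linarith
  have hu : f (.u j true) + f (.u j false) ≤ ∑ j, (f (.u j true) + f (.u j false)) :=
    single_le_sum (fun j _ => add_nonneg (ha0 _) (ha0 _)) (mem_univ j)
  have hv0 : 0 ≤ ∑ i, f (.v0 i) := sum_nonneg fun i _ => ha0 _
  have hsum : posScore a pref (nominees σ) .pp = ∑ v, f v := rfl
  rw [hsum, SVoter.sum_eq]
  linarith [ha0 (numAbove pref (nominees σ) .w0 .pp)]

theorem posScore_ww [∀ v, Std.Asymm (pref v)] (hℓ : 1 ≤ ℓ) (hzero : ∀ k, ℓ ≤ k → a k = 0)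
    (hord : ∀ v c c', sgrp cl v c < sgrp cl v c' → pref v c c') :
    posScore a pref (nominees σ) .ww = a (ℓ - 1) + (2 * m + 1) * a 0 := by
  have hv0' : ∀ i, a (numAbove pref (nominees σ) (.v0' i) .ww) = 0 := fun _ =>
    points_eq_zero_of_lastBlock hℓ hzero hord rfl
  have hu : ∀ j b, a (numAbove pref (nominees σ) (.u j b) .ww) = 0 := fun _ _ =>
    points_eq_zero_of_lastBlock hℓ hzero hord rfl
  have hsum :
      posScore a pref (nominees σ) .ww = ∑ v, a (numAbove pref (nominees σ) v .ww) := rfl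
  rw [hsum, SVoter.sum_eq]
  simp [numAbove_ww_w0 hord, numAbove_ww_v0 hord, hv0', hu]

end Scores

theorem short_rule_necessary_president_iff_unsat_general
    (n m ℓ : ℕ) (hℓ : 1 ≤ ℓ)
    (cl : Fin m → Fin 3 → Fin n × Bool)
    -- the scoring vector: `a k` is the points for position `k+1`
    (a : ℕ → ℤ)
    (hanti : ∀ i j : ℕ, i ≤ j → j < ℓ → a j ≤ a i)
    (hpos : 0 < a (ℓ - 1))
    (hzero : ∀ k : ℕ, ℓ ≤ k → a k = 0)
    -- the preference orders, consistent with the prescribed blocks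
    (pref : SVoter m → SCand n ℓ → SCand n ℓ → Prop)
    (hlin : ∀ v, IsStrictTotalOrder (SCand n ℓ) (pref v))
    (hord : ∀ v c c', sgrp cl v c < sgrp cl v c' → pref v c c') :
    NecessaryPresident a pref (sparties n ℓ) SCand.pp ↔
      ¬ ∃ σ : Fin n → Bool, ∀ j : Fin m, ∃ k : Fin 3, σ (cl j k).1 = (cl j k).2 := by
  have : ∀ v, Std.Asymm (pref v) := fun v => have := hlin v; inferInstance
  have ha := antitone_of_short_scoring hanti hpos hzero
  have ha0 := ha.nonneg_of_eventually_zero hzero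
  constructor
  · rintro hnec ⟨σ, hσ⟩
    have hw := hnec _ (isNomineeSet_nominees σ) (by simp [SCand.Nominated]) .ww
      (by simp [SCand.Nominated])
    rw [posScore_ww hℓ hzero hord] at hw
    linarith [posScore_pp_le_of_satisfied hℓ ha (ha0 0) hzero hord hσ]
  · rintro hunsat C' hC - c hc
    obtain ⟨σ, rfl⟩ := exists_eq_nominees hC
    obtain ⟨j, hj⟩ : ∃ j, ∀ k, σ (cl j k).1 ≠ (cl j k).2 := by
      by_contra! h
      exact hunsat ⟨σ, h⟩
    have hp := le_posScore_pp_of_falsified ha ha0 hord hj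
    by_cases hcp : c = .pp
    · exact hcp ▸ le_rfl
    by_cases hcw : c = .ww
    · rw [hcw, posScore_ww hℓ hzero hord]
      linarith [ha0 (ℓ - 1)]
    · linarith [posScore_le_of_ne hℓ ha (ha0 0) hzero hord (σ := σ) hcp hcw, ha0 (ℓ - 1)]

/-- for every short scoring rule `(a_1, …, a_ℓ, 0, …, 0)` with
`a_1 ≥ … ≥ a_ℓ > 0`, in the election constructed from a (2,2)-E3-SAT formula `φ`,
the candidate `p` is a necessary president iff `φ` is unsatisfiable. -/
theorem short_rule_necessary_president_iff_unsat
    (n m ℓ : ℕ) (hℓ : 1 ≤ ℓ) (hm : 2 ≤ m)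
    (cl : Fin m → Fin 3 → Fin n × Bool)
    -- each clause consists of three distinct literals
    (hdist : ∀ j : Fin m, Function.Injective (cl j))
    -- each variable occurs exactly twice positively and twice negatively
    (hocc : ∀ (x : Fin n) (b : Bool),
      ((Finset.univ : Finset (Fin m × Fin 3)).filter
        fun jk => cl jk.1 jk.2 = (x, b)).card = 2)
    -- the scoring vector: `a k` is the points for position `k+1`
    (a : ℕ → ℤ)
    (hanti : ∀ i j : ℕ, i ≤ j → j < ℓ → a j ≤ a i)
    (hpos : 0 < a (ℓ - 1))
    (hzero : ∀ k : ℕ, ℓ ≤ k → a k = 0)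
    -- the preference orders, consistent with the prescribed blocks
    (pref : SVoter m → SCand n ℓ → SCand n ℓ → Prop)
    (hlin : ∀ v, IsStrictTotalOrder (SCand n ℓ) (pref v))
    (hord : ∀ v c c', sgrp cl v c < sgrp cl v c' → pref v c c') :
    NecessaryPresident a pref (sparties n ℓ) SCand.pp ↔
      ¬ ∃ σ : Fin n → Bool, ∀ j : Fin m, ∃ k : Fin 3, σ (cl j k).1 = (cl j k).2 :=
  short_rule_necessary_president_iff_unsat_general n m ℓ hℓ cl a hanti hpos hzero pref hlin hord
end
end

section
/- Let ℓ ≥ 1 and a > a_1 ≥ a_2 ≥ … ≥ a_ℓ, and use in every reduced election with t nominees the scoring vector (a, …, a, a_1, a_2, …, a_ℓ) of length t. Let (S, ℱ, k) be a Hitting Set instance with S = {s_1, …, s_n}, ℱ = {F_1, …, F_m}, and 1 ≤ k ≤ n. Construct the election with parties P = {p}, P_w = {w}, P_i = {s_1^i, …, s_n^i} for each i ∈ [k] (s_r^i being the i-th copy of element s_r), and ℓ−1 further singleton parties whose members form the set D; write F_j^i = {s^i : s ∈ F_j}. The 2k+2m+1 voters are: one voter with order [rest] ≻ p ≻ D;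 for each i ∈ [k] two voters with order [rest] ≻ s_1^i ≻ s_2^i ≻ … ≻ s_n^i ≻ D; and for each j ∈ [m] two voters with order [rest] ≻ w ≻ F_j^1 ≻ F_j^2 ≻ … ≻ F_j^k ≻ D, where each displayed set stands for its elements in some fixed order and [rest] denotes all remaining candidates in an arbitrary order. Then, for every choice of these arbitrary orders, p is a necessary president in this election if and only if (S, ℱ) admits no hitting set of size at most k. -/
/-!
In every reduced election the first voter ranks `p` directly above the `ℓ - 1` dummies, and
every other voter ranks `p` in its top block, above at least `ℓ` nominees. So `p` collects `a_1`
once and `a` otherwise, and it is beaten exactly when some nominee collects `a` from every voter.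
The dummies and `p` are vetoed by the first voter and the nominee of `P_i` by the voters of
`P_i`; the candidate `w` collects `a` from the voters of `F_j` iff the nominee of some `P_i` is a
copy of an element of `F_j`. Hence `p` loses some reduced election iff some choice of one element
per copy `i ∈ [k]` hits every `F_j`, i.e. iff there is a hitting set of size at most `k`.
-/

open scoped Classical

noncomputable section

/-- Candidates: `p`, `w`, a candidate `s_r^i` for each copy `i ∈ [k]` of each element
`r ∈ [n]`, and a set `D` of `ℓ−1` dummies. -/
inductive GCand (n k ℓ : ℕ) where
  | pp : GCand n k ℓ
  | ww : GCand n k ℓ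
  | elem : Fin k → Fin n → GCand n k ℓ
  | dum : Fin (ℓ - 1) → GCand n k ℓ
  deriving DecidableEq, Fintype

/-- Voters: one voter `v0`, two voters for each copy `i ∈ [k]`, and two voters for
each set `F_j`; `2k + 2m + 1` voters in total. -/
inductive GVoter (k m : ℕ) where
  | v0 : GVoter k m
  | wv : Fin k → Bool → GVoter k m
  | vj : Fin m → Bool → GVoter k m
  deriving DecidableEq, Fintype

variable {n k m ℓ : ℕ}

/-- For each voter, the index of the block of candidates a candidate belongs to in
that voter's preference order (blocks are linearly ordered; the order inside a block
is arbitrary).  `F j` is the `j`-th set of the Hitting Set instance. -/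
def ggrp (nn kk : ℕ) (F : Fin m → Finset (Fin n)) : GVoter k m → GCand n k ℓ → ℕ
  | .v0, .pp => 1
  | .v0, .dum _ => 2
  | .v0, _ => 0
  | .wv i _, .elem i' r => if i' = i then 1 + r.val else 0
  | .wv _ _, .dum _ => nn + 1
  | .wv _ _, _ => 0
  | .vj _ _, .ww => 1
  | .vj j _, .elem i r => if r ∈ F j then 2 + i.val else 0
  | .vj _ _, .dum _ => kk + 2
  | .vj _ _, _ => 0

/-- Each candidate is sent to the index of its party. -/
def grep : GCand n k ℓ → Unit ⊕ Unit ⊕ Fin k ⊕ Fin (ℓ - 1)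
  | .pp => Sum.inl ()
  | .ww => Sum.inr (Sum.inl ())
  | .elem i _ => Sum.inr (Sum.inr (Sum.inl i))
  | .dum d => Sum.inr (Sum.inr (Sum.inr d))

/-- The parties: `{p}`, `{w}`, `P_i = {s_1^i, …, s_n^i}` for `i ∈ [k]`, and
singleton dummy parties. -/
def gparties (n k ℓ : ℕ) : Finset (Finset (GCand n k ℓ)) :=
  Finset.univ.image fun c : GCand n k ℓ =>
    Finset.univ.filter fun c' => grep c' = grep c

/-- Score of `c` over the nominee set `C'` for the Veto-like scoring vector
`(a, …, a, a_1, …, a_ℓ)`: a voter ranking `b` nominees below `c` contributes `a`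
points if `b ≥ ℓ` and `as b` points otherwise, where `as b = a_{ℓ−b}` (so `as 0`
is the last entry `a_ℓ` and `as (ℓ−1) = a_1`). -/
def vetoScore {C V : Type*} [Fintype V] (ℓ : ℕ) (a : ℤ) (as : ℕ → ℤ)
    (pref : V → C → C → Prop) (C' : Finset C) (c : C) : ℤ :=
  ∑ v : V,
    (if ℓ ≤ (C'.filter fun c' => pref v c c').card then a
     else as ((C'.filter fun c' => pref v c c').card))

/-- `p` is a winner of every reduced election containing `p`. -/
def NecessaryPresidentVeto {C V : Type*} [Fintype V] (ℓ : ℕ) (a : ℤ) (as : ℕ → ℤ)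
    (pref : V → C → C → Prop) (Ps : Finset (Finset C)) (p : C) : Prop :=
  ∀ C' : Finset C, IsNomineeSet Ps C' → p ∈ C' →
    ∀ c ∈ C', vetoScore ℓ a as pref C' c ≤ vetoScore ℓ a as pref C' p

open Finset

section Scores

variable {C V : Type*} [Fintype V]

def belowCount (pref : V → C → C → Prop) (C' : Finset C) (v : V) (c : C) : ℕ :=
  (C'.filter fun c' => pref v c c').card

def vetoPoints (ℓ : ℕ) (a : ℤ) (as : ℕ → ℤ) (b : ℕ) : ℤ :=
  if ℓ ≤ b then a else as b

variable {a : ℤ} {as : ℕ → ℤ} {pref : V → C → C → Prop} {C' : Finset C}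

theorem vetoScore_eq_sum (c : C) :
    vetoScore ℓ a as pref C' c = ∑ v, vetoPoints ℓ a as (belowCount pref C' v c) :=
  rfl

theorem vetoPoints_le_of_lt (hmono : ∀ i j : ℕ, i ≤ j → j < ℓ → as i ≤ as j) {b : ℕ}
    (hb : b < ℓ) : vetoPoints ℓ a as b ≤ as (ℓ - 1) := by
  rw [vetoPoints, if_neg (by omega)]
  exact hmono b (ℓ - 1) (by omega) (by omega)

theorem vetoPoints_le (hmono : ∀ i j : ℕ, i ≤ j → j < ℓ → as i ≤ as j)
    (htop : as (ℓ - 1) < a) (b : ℕ) : vetoPoints ℓ a as b ≤ a := by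
  by_cases hb : ℓ ≤ b
  · rw [vetoPoints, if_pos hb]
  · exact (vetoPoints_le_of_lt hmono (not_le.mp hb)).trans htop.le

theorem vetoScore_le_of_belowCount_lt (hmono : ∀ i j : ℕ, i ≤ j → j < ℓ → as i ≤ as j)
    (htop : as (ℓ - 1) < a) {c : C} {v₀ : V} (hv₀ : belowCount pref C' v₀ c < ℓ) :
    vetoScore ℓ a as pref C' c ≤ as (ℓ - 1) + ((Fintype.card V : ℤ) - 1) * a := by
  have hrest : ∑ v ∈ univ.erase v₀, vetoPoints ℓ a as (belowCount pref C' v c)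
      ≤ ((Fintype.card V : ℤ) - 1) * a := by
    refine (sum_le_card_nsmul _ _ a fun v _ => vetoPoints_le hmono htop _).trans_eq ?_
    rw [card_erase_of_mem (mem_univ v₀), card_univ, nsmul_eq_mul,
      Nat.cast_sub (Fintype.card_pos_iff.mpr ⟨v₀⟩), Nat.cast_one]
  rw [vetoScore_eq_sum, ← add_sum_erase _ _ (mem_univ v₀)]
  exact add_le_add (vetoPoints_le_of_lt hmono hv₀) hrest

theorem vetoScore_eq_of_le_belowCount {c : C} (hc : ∀ v, ℓ ≤ belowCount pref C' v c) :
    vetoScore ℓ a as pref C' c = Fintype.card V * a := by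
  simp only [vetoScore_eq_sum, vetoPoints, if_pos (hc _), sum_const, card_univ, nsmul_eq_mul]

theorem vetoScore_eq_of_vetoed_once (hℓ : 1 ≤ ℓ) {p : C} {v₀ : V}
    (hv₀ : belowCount pref C' v₀ p = ℓ - 1) (hv : ∀ v ≠ v₀, ℓ ≤ belowCount pref C' v p) :
    vetoScore ℓ a as pref C' p = as (ℓ - 1) + ((Fintype.card V : ℤ) - 1) * a := by
  have hrest : ∀ v ∈ univ.erase v₀, vetoPoints ℓ a as (belowCount pref C' v p) = a :=
    fun v hv' => if_pos (hv v (ne_of_mem_erase hv'))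
  rw [vetoScore_eq_sum, ← add_sum_erase _ _ (mem_univ v₀), sum_congr rfl hrest, hv₀, vetoPoints,
    if_neg (by omega), sum_const, card_erase_of_mem (mem_univ v₀), card_univ, nsmul_eq_mul,
    Nat.cast_sub (Fintype.card_pos_iff.mpr ⟨v₀⟩), Nat.cast_one]

theorem vetoScore_le_iff_of_vetoed_once (hℓ : 1 ≤ ℓ)
    (hmono : ∀ i j : ℕ, i ≤ j → j < ℓ → as i ≤ as j) (htop : as (ℓ - 1) < a)
    {p : C} {v₀ : V} (hv₀ : belowCount pref C' v₀ p = ℓ - 1)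
    (hv : ∀ v ≠ v₀, ℓ ≤ belowCount pref C' v p) (c : C) :
    vetoScore ℓ a as pref C' c ≤ vetoScore ℓ a as pref C' p ↔
      ∃ v, belowCount pref C' v c < ℓ := by
  rw [vetoScore_eq_of_vetoed_once hℓ hv₀ hv]
  constructor
  · intro hle
    by_contra! hc
    rw [vetoScore_eq_of_le_belowCount hc] at hle
    linarith
  · rintro ⟨v, hlt⟩
    exact vetoScore_le_of_belowCount_lt hmono htop hlt

end Scores

section BlockOrders

variable {C V : Type*} {pref : V → C → C → Prop} {g : V → C → ℕ} {C' T : Finset C}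
  {v : V} {c : C}

theorem card_le_belowCount (hord : ∀ v c c', g v c < g v c' → pref v c c') (hT : T ⊆ C')
    (hlt : ∀ x ∈ T, g v c < g v x) : T.card ≤ belowCount pref C' v c :=
  card_le_card fun x hx => mem_filter.mpr ⟨hT hx, hord v c x (hlt x hx)⟩

theorem belowCount_le_card (hstrict : ∀ v, IsStrictOrder C (pref v))
    (hord : ∀ v c c', g v c < g v c' → pref v c c')
    (hT : ∀ x ∈ C', x ≠ c → g v c ≤ g v x → x ∈ T) : belowCount pref C' v c ≤ T.card := by
  refine card_le_card fun x hx => ?_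
  obtain ⟨hxC, hcx⟩ := mem_filter.mp hx
  have := hstrict v
  refine hT x hxC (fun h => irrefl c (h ▸ hcx)) (not_lt.mp fun hxc => ?_)
  exact irrefl c (_root_.trans hcx (hord v x c hxc))

end BlockOrders

theorem exists_hittingSet_iff_exists_fin_fun {α ι : Type*} {k : ℕ} (f₀ : Fin k → α)
    (F : ι → Finset α) :
    (∃ S' : Finset α, S'.card ≤ k ∧ ∀ j, ∃ s ∈ S', s ∈ F j) ↔
      ∃ f : Fin k → α, ∀ j, ∃ i, f i ∈ F j := by
  constructor
  · rintro ⟨S', hcard, hhit⟩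
    let e := S'.equivFin
    refine ⟨fun i => if h : (i : ℕ) < S'.card then e.symm ⟨i, h⟩ else f₀ i, fun j => ?_⟩
    obtain ⟨s, hs, hsF⟩ := hhit j
    refine ⟨Fin.castLE hcard (e ⟨s, hs⟩), ?_⟩
    simpa [dif_pos (e ⟨s, hs⟩).isLt] using hsF
  · rintro ⟨f, hf⟩
    refine ⟨univ.image f, card_image_le.trans_eq (card_fin k), fun j => ?_⟩
    obtain ⟨i, hi⟩ := hf j
    exact ⟨f i, mem_image_of_mem f (mem_univ i), hi⟩

theorem isNomineeSet_fibers_iff {C ι : Type*} [Fintype C] [DecidableEq C] [DecidableEq ι]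
    (π : C → ι) {C' : Finset C} :
    IsNomineeSet (univ.image fun c => univ.filter fun c' => π c' = π c) C' ↔
      ∀ c, ∃! x, x ∈ C' ∧ π x = π c := by
  simp only [IsNomineeSet, forall_mem_image, mem_univ, forall_const, inter_filter, inter_univ,
    card_eq_one_iff_existsUnique, mem_filter]

section Election

def nomineeSet (f : Fin k → Fin n) : Finset (GCand n k ℓ) :=
  univ.filter fun c => ∀ i r, c = .elem i r → r = f i

variable {f : Fin k → Fin n}

@[simp]
theorem elem_mem_nomineeSet_iff {i : Fin k} {r : Fin n} :
    (GCand.elem i r : GCand n k ℓ) ∈ nomineeSet f ↔ r = f i := by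
  simp [nomineeSet]

@[simp]
theorem pp_mem_nomineeSet : (GCand.pp : GCand n k ℓ) ∈ nomineeSet f := by
  simp [nomineeSet]

@[simp]
theorem ww_mem_nomineeSet : (GCand.ww : GCand n k ℓ) ∈ nomineeSet f := by
  simp [nomineeSet]

@[simp]
theorem dum_mem_nomineeSet {d : Fin (ℓ - 1)} : (GCand.dum d : GCand n k ℓ) ∈ nomineeSet f := by
  simp [nomineeSet]

theorem isNomineeSet_gparties_iff {C' : Finset (GCand n k ℓ)} :
    IsNomineeSet (gparties n k ℓ) C' ↔ ∀ c : GCand n k ℓ, ∃! x, x ∈ C' ∧ grep x = grep c :=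
  isNomineeSet_fibers_iff grep

theorem isNomineeSet_nomineeSet (f : Fin k → Fin n) :
    IsNomineeSet (gparties n k ℓ) (nomineeSet f) := by
  rw [isNomineeSet_gparties_iff]
  intro c
  cases c with
  | pp => exact ⟨.pp, by simp, fun x hx => by cases x <;> simp_all [grep]⟩
  | ww => exact ⟨.ww, by simp, fun x hx => by cases x <;> simp_all [grep]⟩
  | dum d => exact ⟨.dum d, by simp, fun x hx => by cases x <;> simp_all [grep]⟩
  | elem i r => exact ⟨.elem i (f i), by simp [grep], fun x hx => by cases x <;> simp_all [grep]⟩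

-- A party `P_i` is named through one of its members, which `Nonempty` provides.
theorem exists_eq_nomineeSet [Nonempty (Fin k → Fin n)] {C' : Finset (GCand n k ℓ)}
    (h : IsNomineeSet (gparties n k ℓ) C') : ∃ f : Fin k → Fin n, C' = nomineeSet f := by
  rw [isNomineeSet_gparties_iff] at h
  have hparty : ∀ i : Fin k, ∃ r, GCand.elem i r ∈ C' ∧ ∀ r', GCand.elem i r' ∈ C' → r' = r := by
    intro i
    obtain ⟨x, ⟨hx, hgx⟩, huniq⟩ := h (.elem i (Classical.arbitrary (Fin k → Fin n) i))
    cases x <;> simp only [grep, reduceCtorEq, Sum.inr.injEq, Sum.inl.injEq] at hgx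
    subst hgx
    exact ⟨_, hx, fun r' hr' => GCand.elem.inj (huniq _ ⟨hr', rfl⟩) |>.2⟩
  have hsingleton : ∀ c, (∀ x, grep x = grep c → x = c) → c ∈ C' := fun c hc => by
    obtain ⟨x, ⟨hx, hgx⟩, -⟩ := h c
    rwa [← hc x hgx]
  choose f hf huniq using hparty
  refine ⟨f, ext fun c => ?_⟩
  cases c with
  | elem i r => exact ⟨fun hc => by simpa using huniq i r hc, fun hc => by simp_all⟩
  | _ => exact iff_of_true (hsingleton _ fun x hx => by cases x <;> simp_all [grep]) (by simp)

theorem card_image_dum : (univ.image (GCand.dum : Fin (ℓ - 1) → GCand n k ℓ)).card = ℓ - 1 := by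
  rw [card_image_of_injective _ fun _ _ h => GCand.dum.inj h, card_fin]

variable {F : Fin m → Finset (Fin n)} {pref : GVoter k m → GCand n k ℓ → GCand n k ℓ → Prop}
  {v : GVoter k m} {c : GCand n k ℓ}

theorem card_add_le_belowCount (hord : ∀ v c c', ggrp n k F v c < ggrp n k F v c' → pref v c c')
    {T : Finset (GCand n k ℓ)} (hT : T ⊆ nomineeSet f) (hTdum : ∀ x ∈ T, ∀ d, x ≠ .dum d)
    (hlt : ∀ x ∈ T, ggrp n k F v c < ggrp n k F v x)
    (hdum : ∀ d, ggrp n k F v c < ggrp n k F v (.dum d : GCand n k ℓ)) :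
    T.card + (ℓ - 1) ≤ belowCount pref (nomineeSet f) v c := by
  have hdisj : Disjoint T (univ.image GCand.dum) := disjoint_left.mpr fun x hx hx' => by
    obtain ⟨d, -, rfl⟩ := mem_image.mp hx'
    exact hTdum _ hx d rfl
  rw [← card_image_dum, ← card_union_of_disjoint hdisj]
  refine card_le_belowCount hord (union_subset hT fun x hx => ?_) fun x hx => ?_
  · obtain ⟨d, -, rfl⟩ := mem_image.mp hx
    simp
  · rcases mem_union.mp hx with hx | hx
    · exact hlt x hx
    · obtain ⟨d, -, rfl⟩ := mem_image.mp hx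
      exact hdum d

theorem belowCount_le_pred_of_forall_eq_dum (hstrict : ∀ v, IsStrictOrder (GCand n k ℓ) (pref v))
    (hord : ∀ v c c', ggrp n k F v c < ggrp n k F v c' → pref v c c') {C' : Finset (GCand n k ℓ)}
    (h : ∀ x ∈ C', x ≠ c → ggrp n k F v c ≤ ggrp n k F v x → ∃ d, x = .dum d) :
    belowCount pref C' v c ≤ ℓ - 1 := by
  rw [← card_image_dum (n := n) (k := k)]
  refine belowCount_le_card hstrict hord fun x hx hne hle => ?_
  obtain ⟨d, rfl⟩ := h x hx hne hle
  exact mem_image_of_mem _ (mem_univ d)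

theorem belowCount_pp_v0 (hstrict : ∀ v, IsStrictOrder (GCand n k ℓ) (pref v))
    (hord : ∀ v c c', ggrp n k F v c < ggrp n k F v c' → pref v c c') :
    belowCount pref (nomineeSet f) .v0 .pp = ℓ - 1 := by
  refine le_antisymm (belowCount_le_pred_of_forall_eq_dum hstrict hord fun x _ hne hle => ?_) ?_
  · cases x <;> simp_all [ggrp]
  · simpa using card_add_le_belowCount (f := f) hord (T := ∅) (by simp) (by simp) (by simp)
      (by simp [ggrp])

theorem le_belowCount_of_lt (hℓ : 1 ≤ ℓ)
    (hord : ∀ v c c', ggrp n k F v c < ggrp n k F v c' → pref v c c') {x : GCand n k ℓ}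
    (hx : x ∈ nomineeSet f) (hxdum : ∀ d, x ≠ .dum d) (hlt : ggrp n k F v c < ggrp n k F v x)
    (hdum : ∀ d, ggrp n k F v c < ggrp n k F v (.dum d : GCand n k ℓ)) :
    ℓ ≤ belowCount pref (nomineeSet f) v c := by
  have := card_add_le_belowCount hord (T := {x}) (by simpa using hx) (by simpa using hxdum)
    (by simpa using hlt) hdum
  rw [card_singleton] at this
  omega

theorem le_belowCount_pp (hℓ : 1 ≤ ℓ)
    (hord : ∀ v c c', ggrp n k F v c < ggrp n k F v c' → pref v c c') (hv : v ≠ .v0) :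
    ℓ ≤ belowCount pref (nomineeSet f) v .pp := by
  cases v with
  | v0 => exact absurd rfl hv
  | wv i b =>
    exact le_belowCount_of_lt hℓ hord (x := .elem i (f i)) (by simp) (by simp) (by simp [ggrp])
      (by simp [ggrp])
  | vj j b =>
    exact le_belowCount_of_lt hℓ hord (x := .ww) (by simp) (by simp) (by simp [ggrp])
      (by simp [ggrp])

theorem belowCount_lt_of_forall_eq_dum (hℓ : 1 ≤ ℓ)
    (hstrict : ∀ v, IsStrictOrder (GCand n k ℓ) (pref v))
    (hord : ∀ v c c', ggrp n k F v c < ggrp n k F v c' → pref v c c') {C' : Finset (GCand n k ℓ)}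
    (h : ∀ x ∈ C', x ≠ c → ggrp n k F v c ≤ ggrp n k F v x → ∃ d, x = .dum d) :
    belowCount pref C' v c < ℓ := by
  have := belowCount_le_pred_of_forall_eq_dum hstrict hord h
  omega

theorem forall_le_belowCount_ww_iff (hℓ : 1 ≤ ℓ)
    (hstrict : ∀ v, IsStrictOrder (GCand n k ℓ) (pref v))
    (hord : ∀ v c c', ggrp n k F v c < ggrp n k F v c' → pref v c c') :
    (∀ v, ℓ ≤ belowCount pref (nomineeSet f) v .ww) ↔ ∀ j, ∃ i, f i ∈ F j := by
  constructor
  · intro hww j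
    by_contra! hj
    refine (hww (.vj j true)).not_gt
      (belowCount_lt_of_forall_eq_dum hℓ hstrict hord fun x hx hne hle => ?_)
    cases x <;> simp_all [ggrp]
  · intro hhit v
    cases v with
    | v0 =>
      exact le_belowCount_of_lt hℓ hord (x := .pp) (by simp) (by simp) (by simp [ggrp])
        (by simp [ggrp])
    | wv i b =>
      exact le_belowCount_of_lt hℓ hord (x := .elem i (f i)) (by simp) (by simp) (by simp [ggrp])
        (by simp [ggrp])
    | vj j b =>
      obtain ⟨i, hi⟩ := hhit j
      exact le_belowCount_of_lt hℓ hord (x := .elem i (f i)) (by simp) (by simp)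
        (by simp [ggrp, hi]; omega) (by simp [ggrp])

theorem exists_belowCount_lt_of_ne_ww (hℓ : 1 ≤ ℓ)
    (hstrict : ∀ v, IsStrictOrder (GCand n k ℓ) (pref v))
    (hord : ∀ v c c', ggrp n k F v c < ggrp n k F v c' → pref v c c')
    (hc : c ∈ nomineeSet f) (hcw : c ≠ .ww) : ∃ v, belowCount pref (nomineeSet f) v c < ℓ := by
  cases c with
  | pp => exact ⟨.v0, by rw [belowCount_pp_v0 hstrict hord]; omega⟩
  | ww => exact absurd rfl hcw
  | elem i r =>
    refine ⟨.wv i true, belowCount_lt_of_forall_eq_dum hℓ hstrict hord fun x hx hne hle => ?_⟩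
    cases x <;> simp_all [ggrp]
  | dum d =>
    refine ⟨.v0, belowCount_lt_of_forall_eq_dum hℓ hstrict hord fun x hx hne hle => ?_⟩
    cases x <;> simp_all [ggrp]

theorem forall_exists_belowCount_lt_iff (hℓ : 1 ≤ ℓ)
    (hstrict : ∀ v, IsStrictOrder (GCand n k ℓ) (pref v))
    (hord : ∀ v c c', ggrp n k F v c < ggrp n k F v c' → pref v c c') :
    (∀ c ∈ nomineeSet f, ∃ v, belowCount pref (nomineeSet f) v c < ℓ) ↔
      ¬ ∀ j, ∃ i, f i ∈ F j := by
  rw [← forall_le_belowCount_ww_iff hℓ hstrict hord]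
  simp only [not_forall, not_le]
  refine ⟨fun h => h .ww (by simp), fun hww c hc => ?_⟩
  by_cases hcw : c = .ww
  · exact hcw ▸ hww
  · exact exists_belowCount_lt_of_ne_ww hℓ hstrict hord hc hcw

end Election

theorem necessaryPresidentVeto_gparties_iff [Nonempty (Fin k → Fin n)] {V : Type*} [Fintype V]
    (a : ℤ) (as : ℕ → ℤ) (pref : V → GCand n k ℓ → GCand n k ℓ → Prop) :
    NecessaryPresidentVeto ℓ a as pref (gparties n k ℓ) .pp ↔
      ∀ f : Fin k → Fin n, ∀ c ∈ nomineeSet f,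
        vetoScore ℓ a as pref (nomineeSet f) c ≤ vetoScore ℓ a as pref (nomineeSet f) .pp := by
  constructor
  · exact fun h f => h _ (isNomineeSet_nomineeSet f) (by simp)
  · intro h C' hC' _
    obtain ⟨f, rfl⟩ := exists_eq_nomineeSet hC'
    exact h f

theorem veto_rule_necessary_president_iff_no_hitting_set_general
    (n m k ℓ : ℕ) (hℓ : 1 ≤ ℓ) (hkn : k ≤ n)
    (F : Fin m → Finset (Fin n))
    -- the scoring vector: `a` on all but the last `ℓ` positions, then `a_1 ≥ … ≥ a_ℓ`
    (a : ℤ) (as : ℕ → ℤ)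
    (hmono : ∀ i j : ℕ, i ≤ j → j < ℓ → as i ≤ as j)
    (htop : as (ℓ - 1) < a)
    -- the preference orders, consistent with the prescribed blocks
    (pref : GVoter k m → GCand n k ℓ → GCand n k ℓ → Prop)
    (hlin : ∀ v, IsStrictTotalOrder (GCand n k ℓ) (pref v))
    (hord : ∀ v c c', ggrp n k F v c < ggrp n k F v c' → pref v c c') :
    NecessaryPresidentVeto ℓ a as pref (gparties n k ℓ) GCand.pp ↔
      ¬ ∃ S' : Finset (Fin n), S'.card ≤ k ∧ ∀ j : Fin m, ∃ s ∈ S', s ∈ F j := by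
  have hstrict : ∀ v, IsStrictOrder (GCand n k ℓ) (pref v) := fun v => (hlin v).toIsStrictOrder
  have : Nonempty (Fin k → Fin n) := ⟨Fin.castLE hkn⟩
  rw [necessaryPresidentVeto_gparties_iff, exists_hittingSet_iff_exists_fin_fun (Fin.castLE hkn),
    not_exists]
  refine forall_congr' fun f => ?_
  have hscore := vetoScore_le_iff_of_vetoed_once hℓ hmono htop
    (belowCount_pp_v0 (f := f) hstrict hord) fun v hv => le_belowCount_pp hℓ hord hv
  simp only [hscore]
  exact forall_exists_belowCount_lt_iff hℓ hstrict hord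

/-- for every Veto-like scoring rule `(a, …, a, a_1, …, a_ℓ)` with
`a > a_1 ≥ … ≥ a_ℓ`, in the election constructed from a Hitting Set instance
`(S, ℱ, k)`, the candidate `p` is a necessary president iff the instance admits no
hitting set of size at most `k`. -/
theorem veto_rule_necessary_president_iff_no_hitting_set
    (n m k ℓ : ℕ) (hℓ : 1 ≤ ℓ) (hk : 1 ≤ k) (hkn : k ≤ n)
    (F : Fin m → Finset (Fin n))
    -- the scoring vector: `a` on all but the last `ℓ` positions, then `a_1 ≥ … ≥ a_ℓ`
    (a : ℤ) (as : ℕ → ℤ)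
    (hmono : ∀ i j : ℕ, i ≤ j → j < ℓ → as i ≤ as j)
    (htop : as (ℓ - 1) < a)
    -- the preference orders, consistent with the prescribed blocks
    (pref : GVoter k m → GCand n k ℓ → GCand n k ℓ → Prop)
    (hlin : ∀ v, IsStrictTotalOrder (GCand n k ℓ) (pref v))
    (hord : ∀ v c c', ggrp n k F v c < ggrp n k F v c' → pref v c c') :
    NecessaryPresidentVeto ℓ a as pref (gparties n k ℓ) GCand.pp ↔
      ¬ ∃ S' : Finset (Fin n), S'.card ≤ k ∧ ∀ j : Fin m, ∃ s ∈ S', s ∈ F j :=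
  veto_rule_necessary_president_iff_no_hitting_set_general n m k ℓ hℓ hkn F a as hmono htop pref
    hlin hord
end
end

section
/- Let α ∈ [0,1], let E be an election over candidate set C with party partition 𝒫, and let p ∈ P ∈ 𝒫. For distinct candidates c, c' define γ(c,c') = 1 if N(c,c') > N(c',c), γ(c,c') = α if N(c,c') = N(c',c), and γ(c,c') = 0 otherwise. Then p is a necessary president under Copeland^α if and only if for every candidate w ∈ C \ P, writing P_w for the party of w, it holds that (γ(w,p) − γ(p,w)) + Σ_{P̃ ∈ 𝒫 \ {P, P_w}} max_{c ∈ P̃} (γ(w,c) − γ(p,c)) ≤ 0. -/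
open scoped Classical

noncomputable section

/-- `N(c,c')`: the number of voters preferring `c` to `c'`. -/
def prefCount {C V : Type*} [Fintype V] (pref : V → C → C → Prop) (c c' : C) : ℕ :=
  (Finset.univ.filter fun v : V => pref v c c').card

/-- `γ(c,c')`: the points `c` obtains from the head-to-head comparison with `c'`. -/
def gamma {C V : Type*} [Fintype V] (α : ℝ) (pref : V → C → C → Prop) (c c' : C) : ℝ :=
  if prefCount pref c' c < prefCount pref c c' then 1
  else if prefCount pref c c' = prefCount pref c' c then α
  else 0

/-- The Copeland^α score of `c` in the reduced election over `C'`. -/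
def copelandScore {C V : Type*} [Fintype V] (α : ℝ) (pref : V → C → C → Prop)
    (C' : Finset C) (c : C) : ℝ :=
  ∑ c' ∈ C'.erase c, gamma α pref c c'

/-- `p` is a winner of every reduced election containing `p`, under Copeland^α. -/
def NecessaryPresidentCopeland {C V : Type*} [Fintype V] (α : ℝ)
    (pref : V → C → C → Prop) (Ps : Finset (Finset C)) (p : C) : Prop :=
  ∀ C' : Finset C, IsNomineeSet Ps C' → p ∈ C' →
    ∀ c ∈ C', copelandScore α pref C' c ≤ copelandScore α pref C' p

/-! ### Auxiliary lemmas -/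

section Aux

variable {C : Type*}

/-- Two parties sharing a candidate are equal. -/
lemma partition_unique [Fintype C] {Ps : Finset (Finset C)} (hpart : IsPartition Ps)
    {Pt Pt' : Finset C} {c : C} (h1 : Pt ∈ Ps) (h2 : c ∈ Pt)
    (h3 : Pt' ∈ Ps) (h4 : c ∈ Pt') : Pt = Pt' := by
  obtain ⟨Q, _, hu⟩ := hpart.2 c
  rw [hu Pt ⟨h1, h2⟩, hu Pt' ⟨h3, h4⟩]

/-- The unique nominee of a party. -/
def nomOf {C' Pt : Finset C} (h : (C' ∩ Pt).card = 1) : C :=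
  (Finset.card_eq_one.mp h).choose

lemma nomOf_spec {C' Pt : Finset C} (h : (C' ∩ Pt).card = 1) :
    C' ∩ Pt = {nomOf h} := (Finset.card_eq_one.mp h).choose_spec

lemma nomOf_mem {C' Pt : Finset C} (h : (C' ∩ Pt).card = 1) :
    nomOf h ∈ C' ∧ nomOf h ∈ Pt := by
  have : nomOf h ∈ C' ∩ Pt := by rw [nomOf_spec h]; exact Finset.mem_singleton_self _
  exact Finset.mem_inter.mp this

lemma eq_nomOf {C' Pt : Finset C} (h : (C' ∩ Pt).card = 1) {x : C}
    (hx1 : x ∈ C') (hx2 : x ∈ Pt) : x = nomOf h := by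
  have : x ∈ C' ∩ Pt := Finset.mem_inter.mpr ⟨hx1, hx2⟩
  rw [nomOf_spec h] at this
  exact Finset.mem_singleton.mp this

/-- Decomposition of the score difference. -/
lemma score_diff_s8 {V : Type*} [Fintype V] (α : ℝ) (pref : V → C → C → Prop)
    {C' : Finset C} {p w : C} (hp : p ∈ C') (hw : w ∈ C') (hne : w ≠ p) :
    copelandScore α pref C' w - copelandScore α pref C' p
      = (gamma α pref w p - gamma α pref p w)
        + ∑ c ∈ (C'.erase p).erase w, (gamma α pref w c - gamma α pref p c) := by
  have h1 : p ∈ C'.erase w := Finset.mem_erase.mpr ⟨Ne.symm hne, hp⟩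
  have h2 : w ∈ C'.erase p := Finset.mem_erase.mpr ⟨hne, hw⟩
  have hcomm : (C'.erase w).erase p = (C'.erase p).erase w := by
    ext x; simp only [Finset.mem_erase]; tauto
  rw [copelandScore, copelandScore, ← Finset.add_sum_erase _ _ h1,
    ← Finset.add_sum_erase _ _ h2, hcomm, Finset.sum_sub_distrib]
  ring

/-- The sum over the other nominees equals the sum over the other parties. -/
lemma sum_parties [Fintype C] {Ps : Finset (Finset C)} (hpart : IsPartition Ps)
    {C' : Finset C} (hC' : IsNomineeSet Ps C')
    {P Pw : Finset C} (hP : P ∈ Ps) (hPw : Pw ∈ Ps) {p w : C}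
    (hpP : p ∈ P) (hpC : p ∈ C') (hwPw : w ∈ Pw) (hwC : w ∈ C')
    (f : C → ℝ) :
    ∑ c ∈ (C'.erase p).erase w, f c
      = ∑ Pt ∈ (Ps \ {P, Pw} : Finset (Finset C)).attach,
          f (nomOf (hC' Pt.1 (Finset.mem_sdiff.mp Pt.2).1)) := by
  symm
  apply Finset.sum_bij (i := fun Pt _ => nomOf (hC' Pt.1 (Finset.mem_sdiff.mp Pt.2).1))
  · intro Pt _
    have hmem := Finset.mem_sdiff.mp Pt.2
    have hPt : Pt.1 ∈ Ps := hmem.1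
    have hne : Pt.1 ≠ P ∧ Pt.1 ≠ Pw := by
      have := hmem.2; simp only [Finset.mem_insert, Finset.mem_singleton] at this
      exact not_or.mp this
    obtain ⟨hn1, hn2⟩ := nomOf_mem (hC' Pt.1 hPt)
    refine Finset.mem_erase.mpr ⟨?_, Finset.mem_erase.mpr ⟨?_, hn1⟩⟩
    · intro h
      exact hne.2 (partition_unique hpart hPt (h ▸ hn2) hPw hwPw)
    · intro h
      exact hne.1 (partition_unique hpart hPt (h ▸ hn2) hP hpP)
  · intro Pt _ Pt' _ h
    have h1 := (nomOf_mem (hC' Pt.1 (Finset.mem_sdiff.mp Pt.2).1)).2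
    have h2 := (nomOf_mem (hC' Pt'.1 (Finset.mem_sdiff.mp Pt'.2).1)).2
    rw [h] at h1
    exact Subtype.ext (partition_unique hpart (Finset.mem_sdiff.mp Pt.2).1 h1
      (Finset.mem_sdiff.mp Pt'.2).1 h2)
  · intro b hb
    obtain ⟨hbw, hbp, hbC⟩ :
        b ≠ w ∧ b ≠ p ∧ b ∈ C' := by
      have := Finset.mem_erase.mp hb
      exact ⟨this.1, (Finset.mem_erase.mp this.2).1, (Finset.mem_erase.mp this.2).2⟩
    obtain ⟨Q, ⟨hQ, hbQ⟩, _⟩ := hpart.2 b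
    have hQP : Q ≠ P := by
      intro h; subst h
      exact hbp ((eq_nomOf (hC' Q hQ) hbC hbQ).trans (eq_nomOf (hC' Q hQ) hpC hpP).symm)
    have hQPw : Q ≠ Pw := by
      intro h; subst h
      exact hbw ((eq_nomOf (hC' Q hQ) hbC hbQ).trans (eq_nomOf (hC' Q hQ) hwC hwPw).symm)
    have hQmem : Q ∈ Ps \ {P, Pw} := by
      refine Finset.mem_sdiff.mpr ⟨hQ, ?_⟩
      simp [hQP, hQPw]
    refine ⟨⟨Q, hQmem⟩, Finset.mem_attach _ _, ?_⟩
    exact (eq_nomOf (hC' Q hQ) hbC hbQ).symm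
  · intro Pt _
    rfl

end Aux

/-- characterization of necessary presidents under Copeland^α. -/
theorem necessary_president_copeland_iff
    {C V : Type*} [Fintype C] [Fintype V]
    (α : ℝ) (hα : α ∈ Set.Icc (0 : ℝ) 1)
    (pref : V → C → C → Prop) (hpref : ∀ v : V, IsStrictTotalOrder C (pref v))
    (Ps : Finset (Finset C)) (hpart : IsPartition Ps)
    (P : Finset C) (hP : P ∈ Ps) (p : C) (hp : p ∈ P) :
    NecessaryPresidentCopeland α pref Ps p ↔
      ∀ w : C, w ∉ P → ∀ Pw ∈ Ps, w ∈ Pw →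
        (gamma α pref w p - gamma α pref p w)
          + (∑ Pt ∈ (Ps \ {P, Pw}).attach,
              Pt.1.sup' (hpart.1 Pt.1 (Finset.mem_sdiff.mp Pt.2).1)
                (fun c => gamma α pref w c - gamma α pref p c)) ≤ 0 := by
  constructor
  · -- necessary president → inequality
    intro H w hwP Pw hPw hwPw
    set g : C → ℝ := fun c => gamma α pref w c - gamma α pref p c with hg
    -- choose nominees: p from P, w from Pw, argmax of g elsewhere
    set sel : Finset C → C := fun Pt =>
      if Pt = P then p else if Pt = Pw then w else
        if h : Pt ∈ Ps then (Finset.exists_mem_eq_sup' (hpart.1 Pt h) g).choose else p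
      with hsel
    have hselP : sel P = p := by simp [hsel]
    have hPwne : Pw ≠ P := fun h => hwP (h ▸ hwPw)
    have hselPw : sel Pw = w := by simp [hsel, hPwne]
    have hsel_mem : ∀ Pt ∈ Ps, sel Pt ∈ Pt := by
      intro Pt hPt
      by_cases h1 : Pt = P
      · subst h1; rw [hselP]; exact hp
      by_cases h2 : Pt = Pw
      · subst h2; rw [hselPw]; exact hwPw
      simp only [hsel, if_neg h1, if_neg h2, dif_pos hPt]
      exact (Finset.exists_mem_eq_sup' (hpart.1 Pt hPt) g).choose_spec.1
    have hsel_val : ∀ Pt, (hPt : Pt ∈ Ps) → Pt ≠ P → Pt ≠ Pw →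
        g (sel Pt) = Pt.sup' (hpart.1 Pt hPt) g := by
      intro Pt hPt h1 h2
      simp only [hsel, if_neg h1, if_neg h2, dif_pos hPt]
      exact (Finset.exists_mem_eq_sup' (hpart.1 Pt hPt) g).choose_spec.2.symm
    set C' : Finset C := Ps.image sel with hC'def
    have hinter : ∀ Pt ∈ Ps, C' ∩ Pt = {sel Pt} := by
      intro Pt hPt
      ext x
      simp only [Finset.mem_inter, Finset.mem_image, Finset.mem_singleton, hC'def]
      constructor
      · rintro ⟨⟨Q, hQ, rfl⟩, hx⟩
        have := partition_unique hpart hQ (hsel_mem Q hQ) hPt hx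
        subst this; rfl
      · rintro rfl
        exact ⟨⟨Pt, hPt, rfl⟩, hsel_mem Pt hPt⟩
    have hC'nom : IsNomineeSet Ps C' := by
      intro Pt hPt; rw [hinter Pt hPt]; simp
    have hpC : p ∈ C' := by
      rw [hC'def]; exact Finset.mem_image.mpr ⟨P, hP, hselP⟩
    have hwC : w ∈ C' := by
      rw [hC'def]; exact Finset.mem_image.mpr ⟨Pw, hPw, hselPw⟩
    have hnesym : w ≠ p := fun h => hwP (h ▸ hp)
    have Hle := H C' hC'nom hpC w hwC
    have hdiff := score_diff_s8 α pref hpC hwC hnesym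
    have hsum := sum_parties hpart hC'nom hP hPw hp hpC hwPw hwC g
    have hnomsel : ∀ Pt ∈ (Ps \ ({P, Pw} : Finset (Finset C))).attach,
        g (nomOf (hC'nom Pt.1 (Finset.mem_sdiff.mp Pt.2).1))
          = Pt.1.sup' (hpart.1 Pt.1 (Finset.mem_sdiff.mp Pt.2).1) g := by
      intro Pt _
      have hmem := Finset.mem_sdiff.mp Pt.2
      have hne : Pt.1 ≠ P ∧ Pt.1 ≠ Pw := by
        have := hmem.2; simp only [Finset.mem_insert, Finset.mem_singleton] at this
        exact not_or.mp this
      have hsel_eq : nomOf (hC'nom Pt.1 hmem.1) = sel Pt.1 := by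
        have := nomOf_spec (hC'nom Pt.1 hmem.1)
        rw [hinter Pt.1 hmem.1] at this
        exact (Finset.singleton_injective this.symm)
      rw [hsel_eq, hsel_val Pt.1 hmem.1 hne.1 hne.2]
    calc (gamma α pref w p - gamma α pref p w)
          + (∑ Pt ∈ (Ps \ {P, Pw}).attach,
              Pt.1.sup' (hpart.1 Pt.1 (Finset.mem_sdiff.mp Pt.2).1) g)
        = (gamma α pref w p - gamma α pref p w)
          + ∑ Pt ∈ (Ps \ ({P, Pw} : Finset (Finset C))).attach,
              g (nomOf (hC'nom Pt.1 (Finset.mem_sdiff.mp Pt.2).1)) := by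
          rw [Finset.sum_congr rfl hnomsel]
      _ = copelandScore α pref C' w - copelandScore α pref C' p := by
          rw [hdiff, hsum]
      _ ≤ 0 := by linarith
  · -- inequality → necessary president
    intro H C' hC'nom hpC c hcC
    by_cases hcp : c = p
    · subst hcp; exact le_refl _
    set w := c with hwdef
    have hwP : w ∉ P := by
      intro hwPmem
      exact hcp ((eq_nomOf (hC'nom P hP) hcC hwPmem).trans (eq_nomOf (hC'nom P hP) hpC hp).symm)
    obtain ⟨Pw, ⟨hPw, hwPw⟩, _⟩ := hpart.2 w
    have key := H w hwP Pw hPw hwPw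
    set g : C → ℝ := fun c => gamma α pref w c - gamma α pref p c with hg
    have hdiff := score_diff_s8 α pref hpC hcC hcp
    have hsum := sum_parties hpart hC'nom hP hPw hp hpC hwPw hcC g
    have hterm : ∀ Pt ∈ (Ps \ ({P, Pw} : Finset (Finset C))).attach,
        g (nomOf (hC'nom Pt.1 (Finset.mem_sdiff.mp Pt.2).1))
          ≤ Pt.1.sup' (hpart.1 Pt.1 (Finset.mem_sdiff.mp Pt.2).1) g := by
      intro Pt _
      exact Finset.le_sup' g (nomOf_mem (hC'nom Pt.1 (Finset.mem_sdiff.mp Pt.2).1)).2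
    have hsumle := Finset.sum_le_sum hterm
    have : copelandScore α pref C' w - copelandScore α pref C' p ≤ 0 := by
      rw [hdiff, hsum]
      calc (gamma α pref w p - gamma α pref p w)
            + ∑ Pt ∈ (Ps \ ({P, Pw} : Finset (Finset C))).attach,
                g (nomOf (hC'nom Pt.1 (Finset.mem_sdiff.mp Pt.2).1))
          ≤ (gamma α pref w p - gamma α pref p w)
            + ∑ Pt ∈ (Ps \ ({P, Pw} : Finset (Finset C))).attach,
                Pt.1.sup' (hpart.1 Pt.1 (Finset.mem_sdiff.mp Pt.2).1) g := by linarith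
        _ ≤ 0 := key
    linarith
end
end

section
/- Let E be an election over candidate set C with party partition 𝒫 and p ∈ P ∈ 𝒫. Suppose there exist a candidate w ∈ C \ P with party P_w and a candidate ĉ ∈ C \ (P ∪ P_w) with party P̂ such that, writing ŝ = N(p,ĉ): N(w,ĉ) > ŝ, N(w,p) > ŝ, and every party P̃ ∈ 𝒫 \ {P, P_w, P̂} contains a candidate c with N(w,c) > ŝ. Then p is not a necessary president under the Maximin rule: in the reduced election in which P, P_w, P̂ nominate p, w, ĉ respectively and every other party nominates a candidate c with N(w,c) > ŝ, the Maximin score of w is strictly greater than the Maximin score of p. -/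
open scoped Classical

noncomputable section

/-- The Maximin score of `c` in the reduced election over `C'`:
`min_{c' ∈ C' \ {c}} N(c,c')`. -/
def maximinScore {C V : Type*} [Fintype V] (pref : V → C → C → Prop)
    (C' : Finset C) (c : C) : ℕ :=
  sInf ((fun c' => prefCount pref c c') '' {c' | c' ∈ C' ∧ c' ≠ c})

/-- `p` is a winner of every reduced election containing `p`, under Maximin. -/
def NecessaryPresidentMaximin {C V : Type*} [Fintype V]
    (pref : V → C → C → Prop) (Ps : Finset (Finset C)) (p : C) : Prop :=
  ∀ C' : Finset C, IsNomineeSet Ps C' → p ∈ C' →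
    ∀ c ∈ C', maximinScore pref C' c ≤ maximinScore pref C' p

/-- a certificate that `p` is not a necessary president under Maximin. -/
theorem maximin_not_necessary_president
    {C V : Type*} [Fintype C] [Fintype V]
    (pref : V → C → C → Prop) (hpref : ∀ v : V, IsStrictTotalOrder C (pref v))
    (Ps : Finset (Finset C)) (hpart : IsPartition Ps)
    (P Pw Phat : Finset C) (hP : P ∈ Ps) (hPw : Pw ∈ Ps) (hPhat : Phat ∈ Ps)
    (hPPw : P ≠ Pw) (hPPhat : P ≠ Phat) (hPwPhat : Pw ≠ Phat)
    (p w chat : C) (hp : p ∈ P) (hw : w ∈ Pw) (hchat : chat ∈ Phat)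
    (h1 : prefCount pref p chat < prefCount pref w chat)
    (h2 : prefCount pref p chat < prefCount pref w p)
    (h3 : ∀ Pt ∈ Ps, Pt ≠ P → Pt ≠ Pw → Pt ≠ Phat →
      ∃ c ∈ Pt, prefCount pref p chat < prefCount pref w c) :
    ¬ NecessaryPresidentMaximin pref Ps p ∧
      ∀ C' : Finset C, IsNomineeSet Ps C' → p ∈ C' → w ∈ C' → chat ∈ C' →
        (∀ c ∈ C', c ≠ p → c ≠ w → c ≠ chat →
          prefCount pref p chat < prefCount pref w c) →
        maximinScore pref C' p < maximinScore pref C' w := by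
  have huniq := hpart.2
  have hdist : ∀ {A B : Finset C} {a b : C}, A ∈ Ps → B ∈ Ps → A ≠ B → a ∈ A → b ∈ B →
      a ≠ b := by
    intro A B a b hA hB hAB ha hb h
    subst h
    exact hAB ((huniq a).unique ⟨hA, ha⟩ ⟨hB, hb⟩)
  have hpw : p ≠ w := hdist hP hPw hPPw hp hw
  have hpch : p ≠ chat := hdist hP hPhat hPPhat hp hchat
  have hwch : w ≠ chat := hdist hPw hPhat hPwPhat hw hchat
  have main : ∀ C' : Finset C, IsNomineeSet Ps C' → p ∈ C' → w ∈ C' → chat ∈ C' →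
      (∀ c ∈ C', c ≠ p → c ≠ w → c ≠ chat →
        prefCount pref p chat < prefCount pref w c) →
      maximinScore pref C' p < maximinScore pref C' w := by
    intro C' _ hpC hwC hcC hcond
    have hle : maximinScore pref C' p ≤ prefCount pref p chat :=
      Nat.sInf_le ⟨chat, ⟨hcC, Ne.symm hpch⟩, rfl⟩
    have hne : ((fun c' => prefCount pref w c') ''
        {c' | c' ∈ C' ∧ c' ≠ w}).Nonempty := ⟨_, ⟨p, ⟨hpC, hpw⟩, rfl⟩⟩
    have hmem := Nat.sInf_mem hne
    obtain ⟨c0, ⟨hc0C, hc0w⟩, heq⟩ := hmem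
    have hlt : prefCount pref p chat < prefCount pref w c0 := by
      by_cases hc0p : c0 = p
      · subst hc0p; exact h2
      · by_cases hc0c : c0 = chat
        · subst hc0c; exact h1
        · exact hcond c0 hc0C hc0p hc0w hc0c
    calc maximinScore pref C' p ≤ prefCount pref p chat := hle
      _ < prefCount pref w c0 := hlt
      _ = maximinScore pref C' w := heq
  refine ⟨?_, main⟩
  intro hnec
  -- build the nominee set
  set f : Finset C → C := fun Pt =>
    if Pt = P then p else if Pt = Pw then w else if Pt = Phat then chat
    else if h : Pt ∈ Ps ∧ Pt ≠ P ∧ Pt ≠ Pw ∧ Pt ≠ Phat then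
      (h3 Pt h.1 h.2.1 h.2.2.1 h.2.2.2).choose else p with hf
  have hfmem : ∀ Pt ∈ Ps, f Pt ∈ Pt := by
    intro Pt hPt
    by_cases h1' : Pt = P
    · subst h1'; simpa [hf] using hp
    · by_cases h2' : Pt = Pw
      · subst h2'; simpa [hf, Ne.symm hPPw] using hw
      · by_cases h3' : Pt = Phat
        · subst h3'; simpa [hf, Ne.symm hPPhat, Ne.symm hPwPhat] using hchat
        · have hcond : Pt ∈ Ps ∧ Pt ≠ P ∧ Pt ≠ Pw ∧ Pt ≠ Phat := ⟨hPt, h1', h2', h3'⟩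
          simp only [hf, if_neg h1', if_neg h2', if_neg h3', dif_pos hcond]
          exact (h3 Pt hPt h1' h2' h3').choose_spec.1
  set C' : Finset C := Ps.image f with hC'
  have hnom : IsNomineeSet Ps C' := by
    intro Pt hPt
    have : C' ∩ Pt = {f Pt} := by
      apply Finset.Subset.antisymm
      · intro x hx
        obtain ⟨hx1, hx2⟩ := Finset.mem_inter.1 hx
        obtain ⟨Pt', hPt', hfx⟩ := Finset.mem_image.1 hx1
        have hx3 : x ∈ Pt' := hfx ▸ hfmem Pt' hPt'
        have : Pt' = Pt := (huniq x).unique ⟨hPt', hx3⟩ ⟨hPt, hx2⟩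
        simp [← hfx, this]
      · intro x hx
        rw [Finset.mem_singleton] at hx
        subst hx
        exact Finset.mem_inter.2 ⟨Finset.mem_image_of_mem f hPt, hfmem Pt hPt⟩
    rw [this, Finset.card_singleton]
  have hfP : f P = p := by simp [hf]
  have hfPw : f Pw = w := by simp [hf, Ne.symm hPPw]
  have hfPhat : f Phat = chat := by simp [hf, Ne.symm hPPhat, Ne.symm hPwPhat]
  have hpC : p ∈ C' := hfP ▸ Finset.mem_image_of_mem f hP
  have hwC : w ∈ C' := hfPw ▸ Finset.mem_image_of_mem f hPw
  have hcC : chat ∈ C' := hfPhat ▸ Finset.mem_image_of_mem f hPhat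
  have hgood : ∀ c ∈ C', c ≠ p → c ≠ w → c ≠ chat →
      prefCount pref p chat < prefCount pref w c := by
    intro c hc hcp hcw hcc
    obtain ⟨Pt, hPt, hfc⟩ := Finset.mem_image.1 hc
    have h1' : Pt ≠ P := fun h => hcp (by rw [← hfc, h, hfP])
    have h2' : Pt ≠ Pw := fun h => hcw (by rw [← hfc, h, hfPw])
    have h3' : Pt ≠ Phat := fun h => hcc (by rw [← hfc, h, hfPhat])
    have hcond : Pt ∈ Ps ∧ Pt ≠ P ∧ Pt ≠ Pw ∧ Pt ≠ Phat := ⟨hPt, h1', h2', h3'⟩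
    have : f Pt = (h3 Pt hPt h1' h2' h3').choose := by
      simp only [hf, if_neg h1', if_neg h2', if_neg h3', dif_pos hcond]
    rw [← hfc, this]
    exact (h3 Pt hPt h1' h2' h3').choose_spec.2
  have := main C' hnom hpC hwC hcC hgood
  exact absurd (hnec C' hnom hpC w hwC) (not_le.2 this)
end
end

section
/- In the 20-voter election constructed from a graph G with vertex parts U_1, …, U_k (as described in the context), the pairwise comparison counts satisfy: N(p,u) = 12 for every u ∈ U; N(e,w) = 12 for every e ∈ E; N(w,p) = 11; N(u,u') = 10 for all distinct u, u' ∈ U; N(e,e') = 10 for all distinct e, e' ∈ E; N(w,u) = 10 for every u ∈ U; N(p,e) = 10 for every e ∈ E; and for every vertex u ∈ U_i and edge e ∈ E_{{i',j'}} (i' < j'): if i ∈ {i', j'} and e is not incident to u then N(u,e) = 12; if i ∈ {i', j'} and e is incident to u then N(u,e) = 10; and if i ∉ {i', j'} then N(u,e) = 10. -/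
open scoped Classical

noncomputable section

/-- A vertex of the graph: the pair `(i, a)` is the vertex `u_i^a ∈ U_i`
(all indices `0`-based). -/
abbrev MVtx (k r : ℕ) := Fin k × Fin r

/-- The candidates: `p`, `w`, the vertices of `G`, and the edges of `G` (an edge is
stored as a pair of vertices whose first components are increasing, so that every
edge joins two different parts `U_i`). -/
abbrev MCand (k r : ℕ) (E : Finset (MVtx k r × MVtx k r)) :=
  (Unit ⊕ Unit) ⊕ (MVtx k r ⊕ {e // e ∈ E})

namespace MCand

variable {k r : ℕ} {E : Finset (MVtx k r × MVtx k r)}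

def cp : MCand k r E := Sum.inl (Sum.inl ())
def cw : MCand k r E := Sum.inl (Sum.inr ())
def cv (u : MVtx k r) : MCand k r E := Sum.inr (Sum.inl u)
def ce (e : {e // e ∈ E}) : MCand k r E := Sum.inr (Sum.inr e)

end MCand

/-- The 20 voters. -/
inductive MVoter where
  | x : Fin 4 → MVoter
  | x' : Fin 4 → MVoter
  | y : Fin 4 → MVoter
  | y' : Fin 4 → MVoter
  | z : Fin 2 → MVoter
  | z' : Fin 2 → MVoter
  deriving DecidableEq, Fintype

/-- The position of the block of a candidate in a voter's preference order; blocks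
are listed in increasing block index (the order inside a block is given by the fixed
order on the candidates, or by its reverse). -/
def mgrp {k r : ℕ} {E : Finset (MVtx k r × MVtx k r)} :
    MVoter → MCand k r E → ℕ := fun v c =>
  match v, c with
  -- voters x₁, x₂ (blocks A₁ … A_k) and x₃, x₄ (blocks B₁ … B_k)
  | .x h, .inl (.inl _) => if h.val = 1 then 1 else 0          -- p
  | .x h, .inl (.inr _) => if h.val = 1 then 0 else 1          -- w
  | .x _, .inr (.inl u) => 2 + 2 * r * u.1.val + 2 * u.2.val + 1
  | .x h, .inr (.inr e) =>
      if h.val < 2 then 2 + 2 * r * e.1.1.1.val + 2 * e.1.1.2.val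
      else 2 + 2 * r * e.1.2.1.val + 2 * e.1.2.2.val
  -- voters x'₁, x'₂ (blocks A'_k … A'₁) and x'₃, x'₄ (blocks B'_k … B'₁)
  | .x' _, .inl (.inl _) => 2 * r * k + 1                      -- p
  | .x' _, .inl (.inr _) => 2 * r * k                          -- w
  | .x' _, .inr (.inl u) => 2 * r * (k - 1 - u.1.val) + 2 * (r - 1 - u.2.val) + 1
  | .x' h, .inr (.inr e) =>
      if h.val < 2 then 2 * r * (k - 1 - e.1.1.1.val) + 2 * (r - 1 - e.1.1.2.val)
      else 2 * r * (k - 1 - e.1.2.1.val) + 2 * (r - 1 - e.1.2.2.val)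
  -- voters y₁, y₂ and y₃, y₄
  | .y _, .inl (.inl _) => 0                                   -- p
  | .y _, .inl (.inr _) => 1                                   -- w
  | .y h, .inr (.inl u) =>
      if h.val < 2 then 2 + 2 * u.1.val
      else if u.1.val = 0 then 2 else 1 + 2 * u.1.val
  | .y h, .inr (.inr e) =>
      if h.val < 2 then 3 + 2 * e.1.1.1.val else 2 + 2 * e.1.2.1.val
  -- voters y'₁, y'₂ and y'₃, y'₄
  | .y' _, .inl (.inl _) => 2 * k                              -- p
  | .y' _, .inl (.inr _) => 2 * k - 1                          -- w
  | .y' h, .inr (.inl u) =>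
      if h.val < 2 then
        (if u.1.val = k - 1 then 0 else 1 + 2 * (k - 2 - u.1.val))
      else 2 * (k - 1 - u.1.val)
  | .y' h, .inr (.inr e) =>
      if h.val < 2 then 2 + 2 * (k - 2 - e.1.1.1.val)
      else 2 * (k - 1 - e.1.2.1.val) + 1
  -- voters z₁, z₂
  | .z _, .inl (.inl _) => 0
  | .z _, .inr (.inl _) => 1
  | .z _, .inr (.inr _) => 2
  | .z _, .inl (.inr _) => 3
  -- voters z'₁, z'₂
  | .z' _, .inr (.inr _) => 0
  | .z' _, .inl (.inr _) => 1
  | .z' _, .inl (.inl _) => 2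
  | .z' _, .inr (.inl _) => 3

/-- Whether the multi-candidate blocks of a voter are listed in the fixed candidate
order (`true`) or in its reverse (`false`). -/
def mdir : MVoter → Bool
  | .x _ => true
  | .y _ => true
  | .z _ => true
  | _ => false

/-- The preference order of a voter: candidates in an earlier block are preferred,
and inside a block candidates are ordered by the fixed order `ord` or its reverse. -/
def mpref {k r : ℕ} {E : Finset (MVtx k r × MVtx k r)} (ord : MCand k r E → ℕ)
    (v : MVoter) (c c' : MCand k r E) : Prop :=
  mgrp v c < mgrp v c' ∨
    (mgrp v c = mgrp v c' ∧ (if mdir v then ord c < ord c' else ord c' < ord c))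

lemma count_eq {C : Type*} (pref : MVoter → C → C → Prop) (c c' : C)
    (g : MVoter → Bool) (n : ℕ)
    (h : ∀ v, pref v c c' ↔ g v = true)
    (hn : (∑ v : MVoter, if g v = true then 1 else 0) = n) :
    prefCount pref c c' = n := by
  unfold prefCount
  rw [Finset.card_filter, Finset.sum_congr rfl fun v _ => if_congr (h v) rfl rfl]
  exact hn

lemma lexlt_iff {r i a i' a' : ℕ} (ha : a < r) (ha' : a' < r) :
    r * i + a < r * i' + a' ↔ (i < i' ∨ (i = i' ∧ a < a')) := by
  rcases lt_trichotomy i i' with h | rfl | h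
  · have h1 : r * i + a < r * (i+1) := by rw [Nat.mul_succ]; omega
    have h2 : r * (i+1) ≤ r * i' := Nat.mul_le_mul_left _ h
    omega
  · omega
  · have h1 : r * i' + a' < r * (i'+1) := by rw [Nat.mul_succ]; omega
    have h2 : r * (i'+1) ≤ r * i := Nat.mul_le_mul_left _ h
    omega

lemma rev_bound {r k i a : ℕ} (hr : 1 ≤ r) (hk : 1 ≤ k) :
    r * (k - 1 - i) + (r - 1 - a) < r * k := by
  have := lexlt_iff (r := r) (i := k - 1 - i) (a := r - 1 - a) (i' := k) (a' := 0)
    (by omega) (by omega)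
  omega

def gfun (c1 c2 c3 c4 c5 c6 c7 c8 c9 c10 : Bool) : MVoter → Bool
  | .x h => if h.val < 2 then c1 else c2
  | .x' h => if h.val < 2 then c3 else c4
  | .y h => if h.val < 2 then c5 else c6
  | .y' h => if h.val < 2 then c7 else c8
  | .z _ => c9
  | .z' _ => c10

lemma sumG : ∀ c1 c2 c3 c4 c5 c6 c7 c8 c9 c10 : Bool,
    (∑ v : MVoter, if gfun c1 c2 c3 c4 c5 c6 c7 c8 c9 c10 v = true then 1 else 0)
    = 2 * (c1.toNat + c2.toNat + c3.toNat + c4.toNat + c5.toNat + c6.toNat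
        + c7.toNat + c8.toNat + c9.toNat + c10.toNat) := by decide

lemma toNat_decide (p : Prop) [Decidable p] : (decide p).toNat = if p then 1 else 0 := by
  by_cases h : p <;> simp [h]

lemma toNat_decide_compl (p : Prop) [Decidable p] :
    (decide p).toNat + (decide ¬p).toNat = 1 := by
  by_cases h : p <;> simp [h]

lemma revlex {r k i a i' a' : ℕ} (hr : 1 ≤ r) (hi : i < k) (hi' : i' < k)
    (ha : a < r) (ha' : a' < r) :
    (r * (k-1-i) + (r-1-a) < r * (k-1-i') + (r-1-a') ↔ r * i' + a' < r * i + a) ∧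
    (r * (k-1-i) + (r-1-a) = r * (k-1-i') + (r-1-a') ↔ r * i' + a' = r * i + a) := by
  have t1 := lexlt_iff (r:=r) (i:=i) (a:=a) (i':=i') (a':=a') ha ha'
  have t2 := lexlt_iff (r:=r) (i:=i') (a:=a') (i':=i) (a':=a) ha' ha
  have t3 := lexlt_iff (r:=r) (i:=k-1-i) (a:=r-1-a) (i':=k-1-i') (a':=r-1-a')
    (by omega) (by omega)
  have t4 := lexlt_iff (r:=r) (i:=k-1-i') (a:=r-1-a') (i':=k-1-i) (a':=r-1-a)
    (by omega) (by omega)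
  constructor <;> constructor <;> intro hyp <;> omega

set_option maxHeartbeats 1600000

/-- the pairwise comparison counts in the 20-voter election
constructed from a graph `G` with vertex parts `U_1, …, U_k`, each of size `r`. -/
theorem ranked_pairs_clique_election_counts
    (k r : ℕ) (hk : 1 ≤ k) (hr : 1 ≤ r)
    (E : Finset (MVtx k r × MVtx k r))
    -- every edge joins two different parts, listed with increasing part index
    (hE : ∀ e ∈ E, e.1.1 < e.2.1)
    -- the fixed arbitrary order on the candidates
    (ord : MCand k r E → ℕ) (hord : Function.Injective ord) :
    (∀ u : MVtx k r, prefCount (mpref ord) MCand.cp (MCand.cv u) = 12) ∧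
    (∀ e : {e // e ∈ E}, prefCount (mpref ord) (MCand.ce e) MCand.cw = 12) ∧
    (prefCount (mpref ord) MCand.cw MCand.cp = 11) ∧
    (∀ u u' : MVtx k r, u ≠ u' →
        prefCount (mpref ord) (MCand.cv u) (MCand.cv u') = 10) ∧
    (∀ e e' : {e // e ∈ E}, e ≠ e' →
        prefCount (mpref ord) (MCand.ce e) (MCand.ce e') = 10) ∧
    (∀ u : MVtx k r, prefCount (mpref ord) MCand.cw (MCand.cv u) = 10) ∧
    (∀ e : {e // e ∈ E}, prefCount (mpref ord) MCand.cp (MCand.ce e) = 10) ∧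
    (∀ (u : MVtx k r) (e : {e // e ∈ E}),
        -- if the parties of `u` and `e` are linked and `e` is not incident to `u`
        ((u.1 = e.1.1.1 ∨ u.1 = e.1.2.1) → e.1.1 ≠ u → e.1.2 ≠ u →
          prefCount (mpref ord) (MCand.cv u) (MCand.ce e) = 12) ∧
        -- if `e` is incident to `u`
        ((e.1.1 = u ∨ e.1.2 = u) →
          prefCount (mpref ord) (MCand.cv u) (MCand.ce e) = 10) ∧
        -- if the parties of `u` and `e` are not linked
        (u.1 ≠ e.1.1.1 → u.1 ≠ e.1.2.1 →
          prefCount (mpref ord) (MCand.cv u) (MCand.ce e) = 10)) := by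
  refine ⟨?_, ?_, ?_, ?_, ?_, ?_, ?_, ?_⟩
  · -- N(p,u) = 12
    intro u
    have hi : (u.1 : ℕ) < k := u.1.isLt
    have key : r * (k - 1 - (u.1:ℕ)) + (r - 1 - (u.2:ℕ)) < r * k := rev_bound hr hk
    refine count_eq _ _ _ (gfun true true false false true true false false true true)
      12 ?_ (by decide)
    intro v
    cases v <;>
      simp only [gfun, mpref, mgrp, mdir, MCand.cp, MCand.cv, ite_self,
        eq_self_iff_true, iff_true, Bool.false_eq_true, iff_false, if_true, if_false, true_and, and_true,
        mul_assoc] <;>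
      first
        | omega
        | (split_ifs <;> omega)
  · -- N(e,w) = 12
    intro e
    have hlt : (e.1.1.1 : ℕ) < (e.1.2.1 : ℕ) := hE e.1 e.2
    have hi2 : (e.1.2.1 : ℕ) < k := (e.1.2.1).isLt
    have key1 : r * (k - 1 - (e.1.1.1:ℕ)) + (r - 1 - (e.1.1.2:ℕ)) < r * k := rev_bound hr hk
    have key2 : r * (k - 1 - (e.1.2.1:ℕ)) + (r - 1 - (e.1.2.2:ℕ)) < r * k := rev_bound hr hk
    refine count_eq _ _ _ (gfun false false true true false false true true true true)
      12 ?_ (by decide)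
    intro v
    cases v <;>
      simp only [gfun, mpref, mgrp, mdir, MCand.cw, MCand.ce, ite_self,
        eq_self_iff_true, iff_true, Bool.false_eq_true, iff_false, if_true, if_false, true_and, and_true,
        mul_assoc] <;>
      first
        | omega
        | (split_ifs <;> omega)
  · -- N(w,p) = 11
    refine count_eq _ _ _ (fun v => match v with
      | .x h => h.val == 1 | .x' _ => true | .y _ => false
      | .y' _ => true | .z _ => false | .z' _ => true) 11 ?_ (by decide)
    intro v
    cases v with
    | x h =>
        by_cases hh : h.val = 1 <;>
          simp [mpref, mgrp, mdir, MCand.cw, MCand.cp, hh]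
    | x' h => simp [mpref, mgrp, mdir, MCand.cw, MCand.cp]
    | y h => simp [mpref, mgrp, mdir, MCand.cw, MCand.cp]
    | y' h =>
        simp [mpref, mgrp, mdir, MCand.cw, MCand.cp]
        omega
    | z h => simp [mpref, mgrp, mdir, MCand.cw, MCand.cp]
    | z' h => simp [mpref, mgrp, mdir, MCand.cw, MCand.cp]
  · -- N(u,u') = 10
    intro u u' hne
    have ha : (u.2:ℕ) < r := u.2.isLt
    have ha' : (u'.2:ℕ) < r := u'.2.isLt
    have hi : (u.1:ℕ) < k := u.1.isLt
    have hi' : (u'.1:ℕ) < k := u'.1.isLt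
    have huu : ¬((u.1:ℕ) = (u'.1:ℕ) ∧ (u.2:ℕ) = (u'.2:ℕ)) := by
      rintro ⟨h1, h2⟩; exact hne (Prod.ext (Fin.ext h1) (Fin.ext h2))
    have hordne : ord (Sum.inr (Sum.inl u) : MCand k r E) ≠ ord (Sum.inr (Sum.inl u')) := fun hcon =>
      hne (by simpa using hord hcon)
    have t1 := lexlt_iff (r:=r) (i:=(u.1:ℕ)) (a:=(u.2:ℕ)) (i':=(u'.1:ℕ)) (a':=(u'.2:ℕ)) ha ha'
    have t2 := lexlt_iff (r:=r) (i:=(u'.1:ℕ)) (a:=(u'.2:ℕ)) (i':=(u.1:ℕ)) (a':=(u.2:ℕ)) ha' ha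
    refine count_eq _ _ _ (gfun
      (decide (r*(u.1:ℕ)+(u.2:ℕ) < r*(u'.1:ℕ)+(u'.2:ℕ))) (decide (r*(u.1:ℕ)+(u.2:ℕ) < r*(u'.1:ℕ)+(u'.2:ℕ))) (decide ¬(r*(u.1:ℕ)+(u.2:ℕ) < r*(u'.1:ℕ)+(u'.2:ℕ))) (decide ¬(r*(u.1:ℕ)+(u.2:ℕ) < r*(u'.1:ℕ)+(u'.2:ℕ)))
      (decide ((u.1:ℕ) < (u'.1:ℕ) ∨ ((u.1:ℕ) = (u'.1:ℕ) ∧ ord (Sum.inr (Sum.inl u) : MCand k r E) < ord (Sum.inr (Sum.inl u'))))) (decide ((u.1:ℕ) < (u'.1:ℕ) ∨ ((u.1:ℕ) = (u'.1:ℕ) ∧ ord (Sum.inr (Sum.inl u) : MCand k r E) < ord (Sum.inr (Sum.inl u'))))) (decide ¬((u.1:ℕ) < (u'.1:ℕ) ∨ ((u.1:ℕ) = (u'.1:ℕ) ∧ ord (Sum.inr (Sum.inl u) : MCand k r E) < ord (Sum.inr (Sum.inl u'))))) (decide ¬((u.1:ℕ) < (u'.1:ℕ) ∨ ((u.1:ℕ)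 = (u'.1:ℕ) ∧ ord (Sum.inr (Sum.inl u) : MCand k r E) < ord (Sum.inr (Sum.inl u')))))
      (decide (ord (Sum.inr (Sum.inl u) : MCand k r E) < ord (Sum.inr (Sum.inl u')))) (decide ¬(ord (Sum.inr (Sum.inl u) : MCand k r E) < ord (Sum.inr (Sum.inl u'))))) 10 ?_ ?_
    · intro v
      cases v with
      | x h =>
        simp only [gfun, mpref, mgrp, mdir, MCand.cv, MCand.ce, ite_self,
          eq_self_iff_true, iff_true, Bool.false_eq_true, iff_false, if_true, if_false,
          true_and, and_true, decide_eq_true_eq, mul_assoc]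
        first
          | omega
          | (split_ifs <;>
              (try simp only [decide_eq_true_eq, eq_self_iff_true, iff_true,
                Bool.false_eq_true, iff_false, true_and, and_true]) <;> omega)
      | x' h =>
        obtain ⟨hA1, hA2⟩ := revlex (r:=r) (k:=k) (i:=(u.1:ℕ)) (a:=(u.2:ℕ))
          (i':=(u'.1:ℕ)) (a':=(u'.2:ℕ)) hr hi hi' ha ha'
        simp only [gfun, mpref, mgrp, mdir, MCand.cv, MCand.ce, ite_self,
          eq_self_iff_true, iff_true, Bool.false_eq_true, iff_false, if_true, if_false,
          true_and, and_true, decide_eq_true_eq, mul_assoc]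
        first
          | omega
          | (split_ifs <;>
              (try simp only [decide_eq_true_eq, eq_self_iff_true, iff_true,
                Bool.false_eq_true, iff_false, true_and, and_true]) <;> omega)
      | y h =>
        simp only [gfun, mpref, mgrp, mdir, MCand.cv, MCand.ce, ite_self,
          eq_self_iff_true, iff_true, Bool.false_eq_true, iff_false, if_true, if_false,
          true_and, and_true, decide_eq_true_eq, mul_assoc]
        first
          | omega
          | (split_ifs <;>
              (try simp only [decide_eq_true_eq, eq_self_iff_true, iff_true,
                Bool.false_eq_true, iff_false, true_and, and_true]) <;> omega)
      | y' h =>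
        simp only [gfun, mpref, mgrp, mdir, MCand.cv, MCand.ce, ite_self,
          eq_self_iff_true, iff_true, Bool.false_eq_true, iff_false, if_true, if_false,
          true_and, and_true, decide_eq_true_eq, mul_assoc]
        first
          | omega
          | (split_ifs <;>
              (try simp only [decide_eq_true_eq, eq_self_iff_true, iff_true,
                Bool.false_eq_true, iff_false, true_and, and_true]) <;> omega)
      | z h =>
        simp only [gfun, mpref, mgrp, mdir, MCand.cv, MCand.ce, ite_self,
          eq_self_iff_true, iff_true, Bool.false_eq_true, iff_false, if_true, if_false,
          true_and, and_true, decide_eq_true_eq, mul_assoc]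
        first
          | omega
          | (split_ifs <;>
              (try simp only [decide_eq_true_eq, eq_self_iff_true, iff_true,
                Bool.false_eq_true, iff_false, true_and, and_true]) <;> omega)
      | z' h =>
        simp only [gfun, mpref, mgrp, mdir, MCand.cv, MCand.ce, ite_self,
          eq_self_iff_true, iff_true, Bool.false_eq_true, iff_false, if_true, if_false,
          true_and, and_true, decide_eq_true_eq, mul_assoc]
        first
          | omega
          | (split_ifs <;>
              (try simp only [decide_eq_true_eq, eq_self_iff_true, iff_true,
                Bool.false_eq_true, iff_false, true_and, and_true]) <;> omega)
    · rw [sumG]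
      have c1 := toNat_decide_compl (r*(u.1:ℕ)+(u.2:ℕ) < r*(u'.1:ℕ)+(u'.2:ℕ))
      have c3 := toNat_decide_compl ((u.1:ℕ) < (u'.1:ℕ) ∨ ((u.1:ℕ) = (u'.1:ℕ) ∧ ord (Sum.inr (Sum.inl u) : MCand k r E) < ord (Sum.inr (Sum.inl u'))))
      have c5 := toNat_decide_compl (ord (Sum.inr (Sum.inl u) : MCand k r E) < ord (Sum.inr (Sum.inl u')))
      omega
  · -- N(e,e') = 10
    intro e e' hne
    have ha1 : (e.1.1.2:ℕ) < r := (e.1.1.2).isLt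
    have ha2 : (e.1.2.2:ℕ) < r := (e.1.2.2).isLt
    have ha1' : (e'.1.1.2:ℕ) < r := (e'.1.1.2).isLt
    have ha2' : (e'.1.2.2:ℕ) < r := (e'.1.2.2).isLt
    have hi2 : (e.1.2.1 : ℕ) < k := (e.1.2.1).isLt
    have hi2' : (e'.1.2.1 : ℕ) < k := (e'.1.2.1).isLt
    have hlt : (e.1.1.1 : ℕ) < (e.1.2.1 : ℕ) := hE e.1 e.2
    have hlt' : (e'.1.1.1 : ℕ) < (e'.1.2.1 : ℕ) := hE e'.1 e'.2
    have hi1 : (e.1.1.1 : ℕ) < k := by omega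
    have hi1' : (e'.1.1.1 : ℕ) < k := by omega
    have hordne : ord (Sum.inr (Sum.inr e) : MCand k r E) ≠ ord (Sum.inr (Sum.inr e')) := fun hcon =>
      hne (by simpa using hord hcon)
    refine count_eq _ _ _ (gfun
      (decide (r*(e.1.1.1:ℕ)+(e.1.1.2:ℕ) < r*(e'.1.1.1:ℕ)+(e'.1.1.2:ℕ) ∨ (r*(e.1.1.1:ℕ)+(e.1.1.2:ℕ) = r*(e'.1.1.1:ℕ)+(e'.1.1.2:ℕ) ∧ ord (Sum.inr (Sum.inr e) : MCand k r E) < ord (Sum.inr (Sum.inr e'))))) (decide (r*(e.1.2.1:ℕ)+(e.1.2.2:ℕ) < r*(e'.1.2.1:ℕ)+(e'.1.2.2:ℕ) ∨ (r*(e.1.2.1:ℕ)+(e.1.2.2:ℕ) = r*(e'.1.2.1:ℕ)+(e'.1.2.2:ℕ) ∧ ord (Sum.inr (Sum.inr e) : MCand k r E) < ord (Sum.inr (Sum.inr e'))))) (decide ¬(r*(e.1.1.1:ℕ)+(e.1.1.2:ℕ) < r*(e'.1.1.1:ℕ)+(e'.1.1.2:ℕ) ∨ (r*(e.1.1.1:ℕ)+(e.1.1.2:ℕ)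 = r*(e'.1.1.1:ℕ)+(e'.1.1.2:ℕ) ∧ ord (Sum.inr (Sum.inr e) : MCand k r E) < ord (Sum.inr (Sum.inr e'))))) (decide ¬(r*(e.1.2.1:ℕ)+(e.1.2.2:ℕ) < r*(e'.1.2.1:ℕ)+(e'.1.2.2:ℕ) ∨ (r*(e.1.2.1:ℕ)+(e.1.2.2:ℕ) = r*(e'.1.2.1:ℕ)+(e'.1.2.2:ℕ) ∧ ord (Sum.inr (Sum.inr e) : MCand k r E) < ord (Sum.inr (Sum.inr e')))))
      (decide ((e.1.1.1:ℕ) < (e'.1.1.1:ℕ) ∨ ((e.1.1.1:ℕ) = (e'.1.1.1:ℕ) ∧ ord (Sum.inr (Sum.inr e) : MCand k r E) < ord (Sum.inr (Sum.inr e'))))) (decide ((e.1.2.1:ℕ) < (e'.1.2.1:ℕ) ∨ ((e.1.2.1:ℕ) = (e'.1.2.1:ℕ) ∧ ord (Sum.inr (Sum.inr e) : MCand k r E) < ord (Sum.inr (Sum.inr e'))))) (decide ¬((e.1.1.1:ℕ) < (e'.1.1.1:ℕ) ∨ ((e.1.1.1:ℕ) = (e'.1.1.1:ℕ) ∧ ord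 (Sum.inr (Sum.inr e) : MCand k r E) < ord (Sum.inr (Sum.inr e'))))) (decide ¬((e.1.2.1:ℕ) < (e'.1.2.1:ℕ) ∨ ((e.1.2.1:ℕ) = (e'.1.2.1:ℕ) ∧ ord (Sum.inr (Sum.inr e) : MCand k r E) < ord (Sum.inr (Sum.inr e')))))
      (decide (ord (Sum.inr (Sum.inr e) : MCand k r E) < ord (Sum.inr (Sum.inr e')))) (decide ¬(ord (Sum.inr (Sum.inr e) : MCand k r E) < ord (Sum.inr (Sum.inr e'))))) 10 ?_ ?_
    · intro v
      cases v with
      | x h =>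
        simp only [gfun, mpref, mgrp, mdir, MCand.cv, MCand.ce, ite_self,
          eq_self_iff_true, iff_true, Bool.false_eq_true, iff_false, if_true, if_false,
          true_and, and_true, decide_eq_true_eq, mul_assoc]
        first
          | omega
          | (split_ifs <;>
              (try simp only [decide_eq_true_eq, eq_self_iff_true, iff_true,
                Bool.false_eq_true, iff_false, true_and, and_true]) <;> omega)
      | x' h =>
        obtain ⟨hA1, hA2⟩ := revlex (r:=r) (k:=k) (i:=(e.1.1.1:ℕ)) (a:=(e.1.1.2:ℕ))
          (i':=(e'.1.1.1:ℕ)) (a':=(e'.1.1.2:ℕ)) hr hi1 hi1' ha1 ha1'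
        obtain ⟨hB1, hB2⟩ := revlex (r:=r) (k:=k) (i:=(e.1.2.1:ℕ)) (a:=(e.1.2.2:ℕ))
          (i':=(e'.1.2.1:ℕ)) (a':=(e'.1.2.2:ℕ)) hr hi2 hi2' ha2 ha2'
        simp only [gfun, mpref, mgrp, mdir, MCand.cv, MCand.ce, ite_self,
          eq_self_iff_true, iff_true, Bool.false_eq_true, iff_false, if_true, if_false,
          true_and, and_true, decide_eq_true_eq, mul_assoc]
        first
          | omega
          | (split_ifs <;>
              (try simp only [decide_eq_true_eq, eq_self_iff_true, iff_true,
                Bool.false_eq_true, iff_false, true_and, and_true]) <;> omega)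
      | y h =>
        simp only [gfun, mpref, mgrp, mdir, MCand.cv, MCand.ce, ite_self,
          eq_self_iff_true, iff_true, Bool.false_eq_true, iff_false, if_true, if_false,
          true_and, and_true, decide_eq_true_eq, mul_assoc]
        first
          | omega
          | (split_ifs <;>
              (try simp only [decide_eq_true_eq, eq_self_iff_true, iff_true,
                Bool.false_eq_true, iff_false, true_and, and_true]) <;> omega)
      | y' h =>
        simp only [gfun, mpref, mgrp, mdir, MCand.cv, MCand.ce, ite_self,
          eq_self_iff_true, iff_true, Bool.false_eq_true, iff_false, if_true, if_false,
          true_and, and_true, decide_eq_true_eq, mul_assoc]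
        first
          | omega
          | (split_ifs <;>
              (try simp only [decide_eq_true_eq, eq_self_iff_true, iff_true,
                Bool.false_eq_true, iff_false, true_and, and_true]) <;> omega)
      | z h =>
        simp only [gfun, mpref, mgrp, mdir, MCand.cv, MCand.ce, ite_self,
          eq_self_iff_true, iff_true, Bool.false_eq_true, iff_false, if_true, if_false,
          true_and, and_true, decide_eq_true_eq, mul_assoc]
        first
          | omega
          | (split_ifs <;>
              (try simp only [decide_eq_true_eq, eq_self_iff_true, iff_true,
                Bool.false_eq_true, iff_false, true_and, and_true]) <;> omega)
      | z' h =>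
        simp only [gfun, mpref, mgrp, mdir, MCand.cv, MCand.ce, ite_self,
          eq_self_iff_true, iff_true, Bool.false_eq_true, iff_false, if_true, if_false,
          true_and, and_true, decide_eq_true_eq, mul_assoc]
        first
          | omega
          | (split_ifs <;>
              (try simp only [decide_eq_true_eq, eq_self_iff_true, iff_true,
                Bool.false_eq_true, iff_false, true_and, and_true]) <;> omega)
    · rw [sumG]
      have c1 := toNat_decide_compl (r*(e.1.1.1:ℕ)+(e.1.1.2:ℕ) < r*(e'.1.1.1:ℕ)+(e'.1.1.2:ℕ) ∨ (r*(e.1.1.1:ℕ)+(e.1.1.2:ℕ) = r*(e'.1.1.1:ℕ)+(e'.1.1.2:ℕ) ∧ ord (Sum.inr (Sum.inr e) : MCand k r E) < ord (Sum.inr (Sum.inr e'))))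
      have c2 := toNat_decide_compl (r*(e.1.2.1:ℕ)+(e.1.2.2:ℕ) < r*(e'.1.2.1:ℕ)+(e'.1.2.2:ℕ) ∨ (r*(e.1.2.1:ℕ)+(e.1.2.2:ℕ) = r*(e'.1.2.1:ℕ)+(e'.1.2.2:ℕ) ∧ ord (Sum.inr (Sum.inr e) : MCand k r E) < ord (Sum.inr (Sum.inr e'))))
      have c3 := toNat_decide_compl ((e.1.1.1:ℕ) < (e'.1.1.1:ℕ) ∨ ((e.1.1.1:ℕ) = (e'.1.1.1:ℕ) ∧ ord (Sum.inr (Sum.inr e) : MCand k r E) < ord (Sum.inr (Sum.inr e'))))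
      have c4 := toNat_decide_compl ((e.1.2.1:ℕ) < (e'.1.2.1:ℕ) ∨ ((e.1.2.1:ℕ) = (e'.1.2.1:ℕ) ∧ ord (Sum.inr (Sum.inr e) : MCand k r E) < ord (Sum.inr (Sum.inr e'))))
      have c5 := toNat_decide_compl (ord (Sum.inr (Sum.inr e) : MCand k r E) < ord (Sum.inr (Sum.inr e')))
      omega
  · -- N(w,u) = 10
    intro u
    have hi : (u.1 : ℕ) < k := u.1.isLt
    have key : r * (k - 1 - (u.1:ℕ)) + (r - 1 - (u.2:ℕ)) < r * k := rev_bound hr hk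
    refine count_eq _ _ _ (gfun true true false false true true false false false true)
      10 ?_ (by decide)
    intro v
    cases v <;>
      simp only [gfun, mpref, mgrp, mdir, MCand.cw, MCand.cv, ite_self,
        eq_self_iff_true, iff_true, Bool.false_eq_true, iff_false, if_true, if_false, true_and, and_true,
        mul_assoc] <;>
      first
        | omega
        | (split_ifs <;> omega)
  · -- N(p,e) = 10
    intro e
    have hlt : (e.1.1.1 : ℕ) < (e.1.2.1 : ℕ) := hE e.1 e.2
    have hi2 : (e.1.2.1 : ℕ) < k := (e.1.2.1).isLt
    have key1 : r * (k - 1 - (e.1.1.1:ℕ)) + (r - 1 - (e.1.1.2:ℕ)) < r * k := rev_bound hr hk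
    have key2 : r * (k - 1 - (e.1.2.1:ℕ)) + (r - 1 - (e.1.2.2:ℕ)) < r * k := rev_bound hr hk
    refine count_eq _ _ _ (gfun true true false false true true false false true false)
      10 ?_ (by decide)
    intro v
    cases v <;>
      simp only [gfun, mpref, mgrp, mdir, MCand.cp, MCand.ce, ite_self,
        eq_self_iff_true, iff_true, Bool.false_eq_true, iff_false, if_true, if_false, true_and, and_true,
        mul_assoc] <;>
      first
        | omega
        | (split_ifs <;> omega)
  · -- N(u,e) cases
    intro u e
    have hau : (u.2:ℕ) < r := u.2.isLt
    have ha1 : (e.1.1.2:ℕ) < r := (e.1.1.2).isLt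
    have ha2 : (e.1.2.2:ℕ) < r := (e.1.2.2).isLt
    have hiu : (u.1 : ℕ) < k := u.1.isLt
    have hi2 : (e.1.2.1 : ℕ) < k := (e.1.2.1).isLt
    have hlt : (e.1.1.1 : ℕ) < (e.1.2.1 : ℕ) := hE e.1 e.2
    have hi1 : (e.1.1.1 : ℕ) < k := by omega
    have tA1 := lexlt_iff (r:=r) (i:=(u.1:ℕ)) (a:=(u.2:ℕ))
      (i':=(e.1.1.1:ℕ)) (a':=(e.1.1.2:ℕ)) hau ha1
    have tA2 := lexlt_iff (r:=r) (i:=(e.1.1.1:ℕ)) (a:=(e.1.1.2:ℕ))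
      (i':=(u.1:ℕ)) (a':=(u.2:ℕ)) ha1 hau
    have tB1 := lexlt_iff (r:=r) (i:=(u.1:ℕ)) (a:=(u.2:ℕ))
      (i':=(e.1.2.1:ℕ)) (a':=(e.1.2.2:ℕ)) hau ha2
    have tB2 := lexlt_iff (r:=r) (i:=(e.1.2.1:ℕ)) (a:=(e.1.2.2:ℕ))
      (i':=(u.1:ℕ)) (a':=(u.2:ℕ)) ha2 hau
    have hmain : ∀ v, mpref ord v (MCand.cv u) (MCand.ce e) ↔ gfun
        (decide (r*(u.1:ℕ)+(u.2:ℕ) < r*(e.1.1.1:ℕ)+(e.1.1.2:ℕ))) (decide (r*(u.1:ℕ)+(u.2:ℕ) < r*(e.1.2.1:ℕ)+(e.1.2.2:ℕ)))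
        (decide (r*(e.1.1.1:ℕ)+(e.1.1.2:ℕ) < r*(u.1:ℕ)+(u.2:ℕ))) (decide (r*(e.1.2.1:ℕ)+(e.1.2.2:ℕ) < r*(u.1:ℕ)+(u.2:ℕ)))
        (decide ((u.1:ℕ) ≤ (e.1.1.1:ℕ))) (decide ((u.1:ℕ) ≤ (e.1.2.1:ℕ)))
        (decide ((e.1.1.1:ℕ) ≤ (u.1:ℕ))) (decide ((e.1.2.1:ℕ) ≤ (u.1:ℕ)))
        true false v = true := by
      intro v
      cases v with
      | x h =>
        simp only [gfun, mpref, mgrp, mdir, MCand.cv, MCand.ce, ite_self,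
          eq_self_iff_true, iff_true, Bool.false_eq_true, iff_false, if_true, if_false,
          true_and, and_true, decide_eq_true_eq, mul_assoc]
        first
          | omega
          | (split_ifs <;>
              (try simp only [decide_eq_true_eq, eq_self_iff_true, iff_true,
                Bool.false_eq_true, iff_false, true_and, and_true]) <;> omega)
      | x' h =>
        obtain ⟨hA1, hA2⟩ := revlex (r:=r) (k:=k) (i:=(u.1:ℕ)) (a:=(u.2:ℕ))
          (i':=(e.1.1.1:ℕ)) (a':=(e.1.1.2:ℕ)) hr hiu hi1 hau ha1
        obtain ⟨hB1, hB2⟩ := revlex (r:=r) (k:=k) (i:=(u.1:ℕ)) (a:=(u.2:ℕ))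
          (i':=(e.1.2.1:ℕ)) (a':=(e.1.2.2:ℕ)) hr hiu hi2 hau ha2
        simp only [gfun, mpref, mgrp, mdir, MCand.cv, MCand.ce, ite_self,
          eq_self_iff_true, iff_true, Bool.false_eq_true, iff_false, if_true, if_false,
          true_and, and_true, decide_eq_true_eq, mul_assoc]
        first
          | omega
          | (split_ifs <;>
              (try simp only [decide_eq_true_eq, eq_self_iff_true, iff_true,
                Bool.false_eq_true, iff_false, true_and, and_true]) <;> omega)
      | y h =>
        simp only [gfun, mpref, mgrp, mdir, MCand.cv, MCand.ce, ite_self,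
          eq_self_iff_true, iff_true, Bool.false_eq_true, iff_false, if_true, if_false,
          true_and, and_true, decide_eq_true_eq, mul_assoc]
        first
          | omega
          | (split_ifs <;>
              (try simp only [decide_eq_true_eq, eq_self_iff_true, iff_true,
                Bool.false_eq_true, iff_false, true_and, and_true]) <;> omega)
      | y' h =>
        simp only [gfun, mpref, mgrp, mdir, MCand.cv, MCand.ce, ite_self,
          eq_self_iff_true, iff_true, Bool.false_eq_true, iff_false, if_true, if_false,
          true_and, and_true, decide_eq_true_eq, mul_assoc]
        first
          | omega
          | (split_ifs <;>
              (try simp only [decide_eq_true_eq, eq_self_iff_true, iff_true,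
                Bool.false_eq_true, iff_false, true_and, and_true]) <;> omega)
      | z h =>
        simp only [gfun, mpref, mgrp, mdir, MCand.cv, MCand.ce, ite_self,
          eq_self_iff_true, iff_true, Bool.false_eq_true, iff_false, if_true, if_false,
          true_and, and_true, decide_eq_true_eq, mul_assoc]
        first
          | omega
          | (split_ifs <;>
              (try simp only [decide_eq_true_eq, eq_self_iff_true, iff_true,
                Bool.false_eq_true, iff_false, true_and, and_true]) <;> omega)
      | z' h =>
        simp only [gfun, mpref, mgrp, mdir, MCand.cv, MCand.ce, ite_self,
          eq_self_iff_true, iff_true, Bool.false_eq_true, iff_false, if_true, if_false,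
          true_and, and_true, decide_eq_true_eq, mul_assoc]
        first
          | omega
          | (split_ifs <;>
              (try simp only [decide_eq_true_eq, eq_self_iff_true, iff_true,
                Bool.false_eq_true, iff_false, true_and, and_true]) <;> omega)
    refine ⟨?_, ?_, ?_⟩
    · rintro (hu | hu) h1 h2
      · have hieq : (u.1:ℕ) = (e.1.1.1:ℕ) := by rw [hu]
        have hane : (u.2:ℕ) ≠ (e.1.1.2:ℕ) := fun hc =>
          h1 (Prod.ext (Fin.ext hieq.symm) (Fin.ext hc.symm))
        refine count_eq _ _ _ _ 12 hmain ?_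
        rw [sumG]
        simp only [toNat_decide, Bool.toNat_true, Bool.toNat_false]
        split_ifs <;> omega
      · have hieq : (u.1:ℕ) = (e.1.2.1:ℕ) := by rw [hu]
        have hane : (u.2:ℕ) ≠ (e.1.2.2:ℕ) := fun hc =>
          h2 (Prod.ext (Fin.ext hieq.symm) (Fin.ext hc.symm))
        refine count_eq _ _ _ _ 12 hmain ?_
        rw [sumG]
        simp only [toNat_decide, Bool.toNat_true, Bool.toNat_false]
        split_ifs <;> omega
    · rintro (hu | hu)
      · have hieq : (e.1.1.1:ℕ) = (u.1:ℕ) := by rw [hu]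
        have haeq : (e.1.1.2:ℕ) = (u.2:ℕ) := by rw [hu]
        refine count_eq _ _ _ _ 10 hmain ?_
        rw [sumG]
        simp only [toNat_decide, Bool.toNat_true, Bool.toNat_false]
        split_ifs <;> omega
      · have hieq : (e.1.2.1:ℕ) = (u.1:ℕ) := by rw [hu]
        have haeq : (e.1.2.2:ℕ) = (u.2:ℕ) := by rw [hu]
        refine count_eq _ _ _ _ 10 hmain ?_
        rw [sumG]
        simp only [toNat_decide, Bool.toNat_true, Bool.toNat_false]
        split_ifs <;> omega
    · intro h1 h2
      have hne1 : (u.1:ℕ) ≠ (e.1.1.1:ℕ) := fun hc => h1 (Fin.ext hc)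
      have hne2 : (u.1:ℕ) ≠ (e.1.2.1:ℕ) := fun hc => h2 (Fin.ext hc)
      refine count_eq _ _ _ _ 10 hmain ?_
      rw [sumG]
      simp only [toNat_decide, Bool.toNat_true, Bool.toNat_false]
      split_ifs <;> omega
end
end
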